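/- arXiv:1201.0989 — 2 statements merged into one kernel-verified Lean document; each statement's English description precedes it below -/
import Mathlib

section
/- Projection trichotomy I. Let X be a CAT(0) cube complex and let γ: [0,∞) → X be a combinatorial geodesic ray. For i ≥ 0 let H_i be the hyperplane dual to γ([i,i+1]), let γ* be the projection of γ to the contact graph (the embedded edge-path in C(X) through the vertices H_0, H_1, H_2, ...), and let Λ(γ) be the full subgraph of C(X) spanned by W(γ). Then at least one of the following holds: (1) the inclusions γ* → C(X) and Λ(γ) → C(X) are quasi-isometric embeddings; (2) for every p ≥ 0, Λ(γ) contains a complete bipartite subgraph K_{p,p}; (3) there exists R ≥ 0 such that for every t ≥ 0 there is a hyperplane H for which γ ∩ N_R(N(H)) contains a connected subpath of length at least t. -/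
/-!
Combinatorial model of a CAT(0) cube complex via Sageev duality.

`V` is the set of 0-cubes, `H` the set of hyperplanes, and `side h x : Bool`
records which halfspace of the hyperplane `h` contains the 0-cube `x`.
The axioms say exactly that `V` is the set of consistent orientations of the
hyperplanes, each differing from a fixed one on finitely many hyperplanes;
this is precisely the combinatorial data of (the 0-skeleton of) a CAT(0) cube
complex, together with its hyperplane structure.
-/
structure CCC where
  V : Type
  H : Type
  side : H → V → Bool
  nonempty_V : Nonempty V
  vertex_ext : ∀ x y : V, (∀ h, side h x = side h y) → x = y
  sep_finite : ∀ x y : V, {h : H | side h x ≠ side h y}.Finite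
  halfspace_nonempty : ∀ h b, ∃ x, side h x = b
  hyp_inj : ∀ h h' : H, (∀ x, side h x = side h' x) → h = h'
  hyp_inj' : ∀ h h' : H, (∀ x, side h x = !(side h' x)) → h = h'
  realize : ∀ (o : H → Bool) (x : V),
    (∀ h h', ∃ y, side h y = o h ∧ side h' y = o h') →
    {h : H | o h ≠ side h x}.Finite →
    ∃ y, ∀ h, side h y = o h

namespace CCC

variable (X : CCC)

/-- The combinatorial (1-skeleton) distance between 0-cubes: the number of
separating hyperplanes. -/
noncomputable def dist (x y : X.V) : ℕ := (X.sep_finite x y).toFinset.card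

/-- Two 0-cubes are adjacent (joined by a 1-cube) iff exactly one hyperplane
separates them. -/
def Adj (x y : X.V) : Prop :=
  ∃ h, X.side h x ≠ X.side h y ∧ ∀ h', X.side h' x ≠ X.side h' y → h' = h

/-- Two hyperplanes cross iff all four quarter-spaces are nonempty. -/
def Crosses (h h' : X.H) : Prop :=
  ∀ b b' : Bool, ∃ x, X.side h x = b ∧ X.side h' x = b'

/-- The hyperplane `h'` lies in the halfspace `b` of the hyperplane `h`. -/
def InHalf (h' h : X.H) (b : Bool) : Prop :=
  h' ≠ h ∧ ∃ c : Bool, ∀ x, X.side h x = !b → X.side h' x = c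

/-- `h` separates the hyperplanes `h₁` and `h₂`. -/
def SepH (h h₁ h₂ : X.H) : Prop :=
  ∃ b : Bool, X.InHalf h₁ h b ∧ X.InHalf h₂ h (!b)

/-- Two distinct hyperplanes contact iff no third hyperplane separates them. -/
def Contact (h h' : X.H) : Prop := h ≠ h' ∧ ¬ ∃ h'', X.SepH h'' h h'

/-- A facing triple: three distinct hyperplanes, each having a halfspace
containing the other two. -/
def FacingTriple (h₁ h₂ h₃ : X.H) : Prop :=
  h₁ ≠ h₂ ∧ h₁ ≠ h₃ ∧ h₂ ≠ h₃ ∧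
  ∃ b₁ b₂ b₃ : Bool,
    X.InHalf h₂ h₁ b₁ ∧ X.InHalf h₃ h₁ b₁ ∧
    X.InHalf h₁ h₂ b₂ ∧ X.InHalf h₃ h₂ b₂ ∧
    X.InHalf h₁ h₃ b₃ ∧ X.InHalf h₂ h₃ b₃

/-- A set of hyperplanes is inseparable if every hyperplane separating two of
its members belongs to it. -/
def Inseparable (U : Set X.H) : Prop :=
  ∀ u ∈ U, ∀ u' ∈ U, ∀ h, X.SepH h u u' → h ∈ U

/-- A set of hyperplanes is unidirectional if each member has a halfspace
containing only finitely many members. -/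
def Unidirectional (U : Set X.H) : Prop :=
  ∀ u ∈ U, ∃ b : Bool, {h | h ∈ U ∧ X.InHalf h u b}.Finite

def NoFacingTriple (U : Set X.H) : Prop :=
  ∀ h₁ ∈ U, ∀ h₂ ∈ U, ∀ h₃ ∈ U, ¬ X.FacingTriple h₁ h₂ h₃

/-- A unidirectional boundary set (UBS). -/
def IsUBS (U : Set X.H) : Prop :=
  U.Infinite ∧ X.Inseparable U ∧ X.Unidirectional U ∧ X.NoFacingTriple U

/-- Almost-equivalence: finite symmetric difference. -/
def AlmostEq (U U' : Set X.H) : Prop := (symmDiff U U').Finite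

/-- A minimal UBS. -/
def MinUBS (U : Set X.H) : Prop :=
  X.IsUBS U ∧ ∀ U' ⊆ U, X.IsUBS U' → X.AlmostEq U U'

/-- The simplex (= almost-equivalence class of UBSs) represented by `U` is a
face of the simplex represented by `V`. -/
def FaceOf (U V : Set X.H) : Prop :=
  ∃ U' V', X.IsUBS U' ∧ X.IsUBS V' ∧ X.AlmostEq U U' ∧ X.AlmostEq V V' ∧ U' ⊆ V'

/-- `U` decomposes, up to almost-equivalence, into `k` pairwise disjoint
minimal UBSs; i.e. the class of `U` is a `(k-1)`-simplex of `∂X`. -/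
def HasDim (U : Set X.H) (k : ℕ) : Prop :=
  ∃ 𝒰 : Fin k → Set X.H, (∀ i, X.MinUBS (𝒰 i)) ∧
    (∀ i j, i ≠ j → Disjoint (𝒰 i) (𝒰 j)) ∧ X.AlmostEq U (⋃ i, 𝒰 i)

/-- No infinite family of pairwise-crossing hyperplanes. -/
def NoInfiniteCrossing : Prop :=
  ∀ S : Set X.H, (∀ h ∈ S, ∀ h' ∈ S, h ≠ h' → X.Crosses h h') → S.Finite

def LocallyFinite : Prop := ∀ x : X.V, {y | X.Adj x y}.Finite

/-- A combinatorial geodesic ray (parameterized by its vertices). -/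
def IsGeodesicRay (γ : ℕ → X.V) : Prop :=
  ∀ m n : ℕ, m ≤ n → X.dist (γ m) (γ n) = n - m

/-- A bi-infinite combinatorial geodesic. -/
def IsGeodesicLine (α : ℤ → X.V) : Prop :=
  ∀ m n : ℤ, m ≤ n → (X.dist (α m) (α n) : ℤ) = n - m

/-- A combinatorial geodesic segment of length `n`. -/
def IsGeodSeg (c : ℕ → X.V) (n : ℕ) : Prop :=
  ∀ i j : ℕ, i ≤ j → j ≤ n → X.dist (c i) (c j) = j - i

/-- The set of hyperplanes crossing (dual to the 1-cubes of) the path `γ`. -/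
def WSet (γ : ℕ → X.V) : Set X.H :=
  {h | ∃ n : ℕ, X.side h (γ n) ≠ X.side h (γ (n+1))}

/-- The 0-cubes of the carrier `N(h)` of the hyperplane `h`. -/
def carrier (h : X.H) : Set X.V :=
  {x | ∃ y, X.Adj x y ∧ X.side h x ≠ X.side h y}

/-- An essential hyperplane: each halfspace contains 0-cubes arbitrarily far
from the carrier. -/
def EssentialHyp (h : X.H) : Prop :=
  ∀ b : Bool, ∀ n : ℕ, ∃ x, X.side h x = b ∧ ∀ y ∈ X.carrier h, n ≤ X.dist x y

/-- Combinatorial convexity of a set of 0-cubes (the 0-skeleton of a convex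
subcomplex). -/
def IsConvexSet (S : Set X.V) : Prop :=
  ∀ x ∈ S, ∀ y ∈ S, ∀ z, X.dist x z + X.dist z y = X.dist x y → z ∈ S

/-- `x` and `y` are joined by a combinatorial path avoiding `S`. -/
def ReachAvoid (S : Set X.V) (x y : X.V) : Prop :=
  ∃ (n : ℕ) (c : ℕ → X.V), c 0 = x ∧ c n = y ∧
    (∀ i < n, X.Adj (c i) (c (i+1))) ∧ ∀ i ≤ n, c i ∉ S

/-- No compact (finite) convex subcomplex disconnects `X`. -/
def CompactlyIndecomposable : Prop :=
  ∀ K : Set X.V, K.Finite → X.IsConvexSet K →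
    ∀ x y : X.V, x ∉ K → y ∉ K → X.ReachAvoid K x y

/-- `γ` bounds an eighth-flat: some eighth-flat (the subcomplex of the standard
tiling of `[0,∞)²` below the graph of an unbounded nondecreasing function)
embeds isometrically and cubically in `X` with image containing `γ`. -/
def BoundsEighthFlat (γ : ℕ → X.V) : Prop :=
  ∃ g : ℕ → ℕ, Monotone g ∧ (∀ N : ℕ, ∃ m, N ≤ g m) ∧
    ∃ e : {p : ℕ × ℕ // p.2 ≤ g p.1} → X.V,
      (∀ p q, X.dist (e p) (e q) = Nat.dist p.1.1 q.1.1 + Nat.dist p.1.2 q.1.2) ∧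
      ∀ n : ℕ, ∃ p, e p = γ n

/-- An edge-chain in the contact graph. -/
def CChain (c : ℕ → X.H) (n : ℕ) : Prop := ∀ i < n, X.Contact (c i) (c (i+1))

/-- Distance in the contact graph `C(X)` (`⊤` if there is no path). -/
noncomputable def cdist (h h' : X.H) : ℕ∞ :=
  sInf {e : ℕ∞ | ∃ (n : ℕ) (c : ℕ → X.H), c 0 = h ∧ c n = h' ∧ X.CChain c n ∧ e = n}

/-- An edge-chain in the crossing graph. -/
def XChain (c : ℕ → X.H) (n : ℕ) : Prop := ∀ i < n, X.Crosses (c i) (c (i+1))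

/-- Distance in the crossing graph `Δ(X)`. -/
noncomputable def xdist (h h' : X.H) : ℕ∞ :=
  sInf {e : ℕ∞ | ∃ (n : ℕ) (c : ℕ → X.H), c 0 = h ∧ c n = h' ∧ X.XChain c n ∧ e = n}

/-- Distance in the full subgraph `Λ(γ)` of the contact graph spanned by the
hyperplanes crossing `γ`. -/
noncomputable def ldist (γ : ℕ → X.V) (h h' : X.H) : ℕ∞ :=
  sInf {e : ℕ∞ | ∃ (n : ℕ) (c : ℕ → X.H), c 0 = h ∧ c n = h' ∧
    (∀ i ≤ n, c i ∈ X.WSet γ) ∧ X.CChain c n ∧ e = n}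

/-- Two 0-simplices of `∂X` (represented by minimal UBSs) are adjacent in the
1-skeleton of `∂X`. -/
def BAdj (U V : Set X.H) : Prop :=
  X.MinUBS U ∧ X.MinUBS V ∧ ¬ X.AlmostEq U V ∧
    ∃ W, X.IsUBS W ∧ X.FaceOf U W ∧ X.FaceOf V W

/-- Distance in the 1-skeleton of the simplicial boundary `∂X`, between the
0-simplices represented by the minimal UBSs `U` and `V`. -/
noncomputable def bdist (U V : Set X.H) : ℕ∞ :=
  sInf {e : ℕ∞ | ∃ (n : ℕ) (c : ℕ → Set X.H),
    X.AlmostEq (c 0) U ∧ X.AlmostEq (c n) V ∧ (∀ i ≤ n, X.MinUBS (c i)) ∧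
    (∀ i < n, X.BAdj (c i) (c (i+1)) ∨ X.AlmostEq (c i) (c (i+1))) ∧ e = n}

/-- Diameter of the contact graph. -/
noncomputable def cdiam : ℕ∞ := ⨆ (h : X.H) (h' : X.H), X.cdist h h'

/-- Diameter of the crossing graph. -/
noncomputable def xdiam : ℕ∞ := ⨆ (h : X.H) (h' : X.H), X.xdist h h'

/-- Diameter of the 1-skeleton of the simplicial boundary. -/
noncomputable def bdiam : ℕ∞ :=
  ⨆ (U : Set X.H) (V : Set X.H) (_ : X.MinUBS U) (_ : X.MinUBS V), X.bdist U V

/-- A consistent orientation of the hyperplanes: any two chosen halfspaces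
intersect. -/
def Consistent (χ : X.H → Bool) : Prop :=
  ∀ h h', ∃ x, X.side h x = χ h ∧ X.side h' x = χ h'

/-- The halfspace `b` of `h`, as a set of 0-cubes. -/
def Hs (h : X.H) (b : Bool) : Set X.V := {x | X.side h x = b}

/-- Every simplex of `∂X` is visible, i.e. represented by the set of
hyperplanes crossing some combinatorial geodesic ray. -/
def FullyVisible : Prop :=
  ∀ V, X.IsUBS V → ∃ γ : ℕ → X.V, X.IsGeodesicRay γ ∧ X.AlmostEq (X.WSet γ) V

/-- The halfspace `b` of `h` is shallow: it lies within uniformly bounded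
distance of the carrier of `h`. -/
def ShallowHalf (h : X.H) (b : Bool) : Prop :=
  ∃ R : ℕ, ∀ x, X.side h x = b → ∃ y ∈ X.carrier h, X.dist x y ≤ R

/-- An `r`-avoiding combinatorial path (with respect to the basepoint `x₀`)
of length `n` from `a` to `b`. -/
def AvoidPathLen (x₀ : X.V) (r : ℕ) (a b : X.V) (n : ℕ) : Prop :=
  ∃ c : ℕ → X.V, c 0 = a ∧ c n = b ∧
    (∀ i < n, X.Adj (c i) (c (i+1))) ∧ ∀ i ≤ n, r ≤ X.dist (c i) x₀

/-- Combinatorial geodesic completeness: for every (finite) maximal family of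
pairwise-crossing hyperplanes and every choice of halfspaces, the intersection
of the chosen halfspaces contains 0-cubes arbitrarily far from the
intersection of the carriers. -/
def CombGeodComplete : Prop :=
  ∀ (n : ℕ) (W : Fin n → X.H), Function.Injective W →
    (∀ i j, i ≠ j → X.Crosses (W i) (W j)) →
    (∀ h, ¬ ∀ i, X.Crosses h (W i)) →
    ∀ χ : Fin n → Bool, ∀ R : ℕ,
      ∃ x, (∀ i, X.side (W i) x = χ i) ∧
        ∀ y, (∀ i, y ∈ X.carrier (W i)) → R ≤ X.dist x y

/-- `X` decomposes as a product of two unbounded convex subcomplexes: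
equivalently, the hyperplanes split into two parts, each member of one part
crossing each member of the other, both factors being unbounded. -/
def ProductDecomp : Prop :=
  ∃ H₁ H₂ : Set X.H, Disjoint H₁ H₂ ∧ H₁ ∪ H₂ = Set.univ ∧
    (∀ h₁ ∈ H₁, ∀ h₂ ∈ H₂, X.Crosses h₁ h₂) ∧
    (∀ n : ℕ, ∃ x y : X.V, n ≤ ({h | X.side h x ≠ X.side h y} ∩ H₁).ncard) ∧
    (∀ n : ℕ, ∃ x y : X.V, n ≤ ({h | X.side h x ≠ X.side h y} ∩ H₂).ncard)

/-- `∂X` decomposes as the simplicial join of two disjoint nonempty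
subcomplexes: the 0-simplices split into two nonempty parts, any 0-simplex of
one part spanning a 1-simplex with any 0-simplex of the other. -/
def JoinDecomp : Prop :=
  ∃ 𝒜₁ 𝒜₂ : Set (Set X.H),
    (∀ U ∈ 𝒜₁, X.MinUBS U) ∧ (∀ U ∈ 𝒜₂, X.MinUBS U) ∧
    𝒜₁.Nonempty ∧ 𝒜₂.Nonempty ∧
    (∀ U U', U ∈ 𝒜₁ → X.MinUBS U' → X.AlmostEq U U' → U' ∈ 𝒜₁) ∧
    (∀ U U', U ∈ 𝒜₂ → X.MinUBS U' → X.AlmostEq U U' → U' ∈ 𝒜₂) ∧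
    (∀ U, X.MinUBS U → U ∈ 𝒜₁ ∨ U ∈ 𝒜₂) ∧
    (∀ U ∈ 𝒜₁, ∀ V ∈ 𝒜₂, ¬ X.AlmostEq U V) ∧
    (∀ U ∈ 𝒜₁, ∀ V ∈ 𝒜₂, ∃ W, X.IsUBS W ∧ X.FaceOf U W ∧ X.FaceOf V W)

/-! Relative versions of the hyperplane notions, for a (convex) subcomplex
with 0-cube set `S`; the hyperplanes of the subcomplex are the hyperplanes of
`X` crossing it. -/

/-- `h` crosses the subcomplex with 0-cubes `S`. -/
def CrossesSet (S : Set X.V) (h : X.H) : Prop :=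
  ∃ x ∈ S, ∃ y ∈ S, X.side h x ≠ X.side h y

def InHalfOn (S : Set X.V) (h' h : X.H) (b : Bool) : Prop :=
  h' ≠ h ∧ ∃ c : Bool, ∀ x ∈ S, X.side h x = !b → X.side h' x = c

def SepHOn (S : Set X.V) (h h₁ h₂ : X.H) : Prop :=
  X.CrossesSet S h ∧ ∃ b : Bool, X.InHalfOn S h₁ h b ∧ X.InHalfOn S h₂ h (!b)

def InseparableOn (S : Set X.V) (U : Set X.H) : Prop :=
  ∀ u ∈ U, ∀ u' ∈ U, ∀ h, X.SepHOn S h u u' → h ∈ U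

def UnidirectionalOn (S : Set X.V) (U : Set X.H) : Prop :=
  ∀ u ∈ U, ∃ b : Bool, {h | h ∈ U ∧ X.InHalfOn S h u b}.Finite

def NoFacingTripleOn (S : Set X.V) (U : Set X.H) : Prop :=
  ∀ h₁ ∈ U, ∀ h₂ ∈ U, ∀ h₃ ∈ U, ¬ (h₁ ≠ h₂ ∧ h₁ ≠ h₃ ∧ h₂ ≠ h₃ ∧
    ∃ b₁ b₂ b₃ : Bool,
      X.InHalfOn S h₂ h₁ b₁ ∧ X.InHalfOn S h₃ h₁ b₁ ∧
      X.InHalfOn S h₁ h₂ b₂ ∧ X.InHalfOn S h₃ h₂ b₂ ∧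
      X.InHalfOn S h₁ h₃ b₃ ∧ X.InHalfOn S h₂ h₃ b₃)

/-- A UBS of the subcomplex with 0-cube set `S`. -/
def IsUBSOn (S : Set X.V) (U : Set X.H) : Prop :=
  (∀ h ∈ U, X.CrossesSet S h) ∧ U.Infinite ∧ X.InseparableOn S U ∧
    X.UnidirectionalOn S U ∧ X.NoFacingTripleOn S U

def MinUBSOn (S : Set X.V) (U : Set X.H) : Prop :=
  X.IsUBSOn S U ∧ ∀ U' ⊆ U, X.IsUBSOn S U' → X.AlmostEq U U'

def FaceOfOn (S : Set X.V) (U V : Set X.H) : Prop :=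
  ∃ U' V', X.IsUBSOn S U' ∧ X.IsUBSOn S V' ∧ X.AlmostEq U U' ∧ X.AlmostEq V V' ∧ U' ⊆ V'

def HasDimOn (S : Set X.V) (U : Set X.H) (k : ℕ) : Prop :=
  ∃ 𝒰 : Fin k → Set X.H, (∀ i, X.MinUBSOn S (𝒰 i)) ∧
    (∀ i j, i ≠ j → Disjoint (𝒰 i) (𝒰 j)) ∧ X.AlmostEq U (⋃ i, 𝒰 i)

end CCC

/-!
Suppose `Λ(γ)` contains no `K_{p,p}` and no subpath of `γ` of length `t` stays within distance
`2p` of a single carrier. Then for every hyperplane `c`, at most `2p + t` of the hyperplanes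
`Hd k` equal or contact `c`. Otherwise, among the hyperplanes equal or contacting all these
`Hd k`, pick `c'` whose carrier is nearest to `γ 0`. By minimality, every hyperplane separating a
point `γ n` from `N(c')` crosses `γ`. One crossing `γ` after `n` contacts every `Hd k` with
`k < n`, and one crossing before `n` contacts every `Hd k` with `k > n`: it separates `γ k` from a
point where `N(Hd k)` meets `N(c')`. So if `p` of the `Hd k` lie on each side of `n`, fewer than
`2p` hyperplanes separate `γ n` from `N(c')`, and such `n` fill a window of length `t`.

On the other hand, every hyperplane separating `γ i` from `γ j` equals or contacts a vertex of
any path from `Hd i` to `Hd j` in the contact graph, because consecutive carriers along the path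
meet. A path of length `d` therefore forces `|i - j| ≤ (d + 1)(2p + t)`, which makes both
inclusions quasi-isometric embeddings.
-/

namespace CCC

open scoped Classical

variable {X : CCC}

/-! ### Separating hyperplanes and combinatorial paths -/

noncomputable def sep (X : CCC) (x y : X.V) : Finset X.H := (X.sep_finite x y).toFinset

lemma mem_sep {x y : X.V} {h : X.H} : h ∈ X.sep x y ↔ X.side h x ≠ X.side h y :=
  Set.Finite.mem_toFinset _

lemma dist_eq_card_sep (x y : X.V) : X.dist x y = (X.sep x y).card := rfl

lemma sep_comm (x y : X.V) : X.sep x y = X.sep y x := by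
  ext h
  simp only [mem_sep, ne_comm]

lemma dist_comm (x y : X.V) : X.dist x y = X.dist y x := by
  rw [dist_eq_card_sep, dist_eq_card_sep, sep_comm]

@[simp]
lemma sep_self (x : X.V) : X.sep x x = ∅ := by
  ext h
  simp [mem_sep]

@[simp]
lemma dist_self (x : X.V) : X.dist x x = 0 := by
  simp [dist_eq_card_sep]

lemma sep_subset_union (x y z : X.V) : X.sep x z ⊆ X.sep x y ∪ X.sep y z := by
  intro h hh
  simp only [Finset.mem_union, mem_sep] at hh ⊢
  by_contra! hcon
  exact hh (hcon.1.trans hcon.2)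

lemma dist_triangle (x y z : X.V) : X.dist x z ≤ X.dist x y + X.dist y z :=
  (Finset.card_le_card (sep_subset_union x y z)).trans (Finset.card_union_le _ _)

lemma eq_of_dist_eq_zero {x y : X.V} (h : X.dist x y = 0) : x = y := by
  rw [dist_eq_card_sep, Finset.card_eq_zero] at h
  refine X.vertex_ext x y fun g => ?_
  by_contra hg
  simpa [h] using mem_sep.2 hg

lemma dist_add_dist_eq_iff {x y z : X.V} :
    X.dist x z + X.dist z y = X.dist x y ↔
      ∀ h, X.side h z = X.side h x ∨ X.side h z = X.side h y := by
  have hunion := sep_subset_union x z y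
  simp only [dist_eq_card_sep]
  constructor
  · intro hadd h
    have hinter : X.sep x z ∩ X.sep z y = ∅ := by
      have := Finset.card_union_add_card_inter (X.sep x z) (X.sep z y)
      have := Finset.card_le_card hunion
      exact Finset.card_eq_zero.1 (by omega)
    by_contra! hh
    have hmem : h ∈ X.sep x z ∩ X.sep z y :=
      Finset.mem_inter.2 ⟨mem_sep.2 (Ne.symm hh.1), mem_sep.2 hh.2⟩
    simp [hinter] at hmem
  · intro hbtw
    have heq : X.sep x z ∪ X.sep z y = X.sep x y := by
      refine (Finset.union_subset (fun h hh => ?_) (fun h hh => ?_)).antisymm hunion <;>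
        rw [mem_sep] at hh ⊢ <;> rcases hbtw h with e | e <;> simp_all
    have hdisj : Disjoint (X.sep x z) (X.sep z y) := by
      rw [Finset.disjoint_left]
      intro h h1 h2
      rw [mem_sep] at h1 h2
      rcases hbtw h with e | e <;> simp_all
    rw [← heq, Finset.card_union_of_disjoint hdisj]

lemma side_eq_of_adj {x y : X.V} (hxy : X.Adj x y) {h g : X.H}
    (hh : X.side h x ≠ X.side h y) (hg : g ≠ h) : X.side g x = X.side g y := by
  obtain ⟨h', -, hu⟩ := hxy
  by_contra hne
  exact hg ((hu g hne).trans (hu h hh).symm)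

lemma adj_of_side_eq {x y : X.V} {h : X.H} (hh : X.side h x ≠ X.side h y)
    (hg : ∀ g, g ≠ h → X.side g x = X.side g y) : X.Adj x y :=
  ⟨h, hh, fun g hne => by_contra fun hgh => hne (hg g hgh)⟩

lemma Adj.symm {x y : X.V} (h : X.Adj x y) : X.Adj y x := by
  obtain ⟨g, hg, hu⟩ := h
  exact ⟨g, Ne.symm hg, fun h' he => hu h' (Ne.symm he)⟩

lemma dist_eq_one_iff {x y : X.V} : X.dist x y = 1 ↔ X.Adj x y := by
  rw [dist_eq_card_sep, Finset.card_eq_one]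
  constructor
  · rintro ⟨g, hg⟩
    exact ⟨g, mem_sep.1 (by simp [hg]), fun g' hg' => by simpa [hg] using mem_sep.2 hg'⟩
  · rintro ⟨h, hh, hu⟩
    exact ⟨h, Finset.ext fun g => by simpa [mem_sep] using ⟨hu g, fun e => e ▸ hh⟩⟩

lemma exists_flip (x : X.V) (h : X.H)
    (hc : ∀ g, g ≠ h → ∃ w, X.side h w = !X.side h x ∧ X.side g w = X.side g x) :
    ∃ x', X.side h x' = !X.side h x ∧ ∀ g, g ≠ h → X.side g x' = X.side g x := by
  let o : X.H → Bool := fun g => if g = h then !X.side h x else X.side g x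
  have hcons : ∀ g g', ∃ y, X.side g y = o g ∧ X.side g' y = o g' := by
    intro g g'
    by_cases hg : g = h <;> by_cases hg' : g' = h
    · obtain ⟨w, hw⟩ := X.halfspace_nonempty h (!X.side h x)
      exact ⟨w, by simp [o, hg, hg', hw]⟩
    · obtain ⟨w, hw1, hw2⟩ := hc g' hg'
      exact ⟨w, by simp [o, hg, hg', hw1, hw2]⟩
    · obtain ⟨w, hw1, hw2⟩ := hc g hg
      exact ⟨w, by simp [o, hg, hg', hw1, hw2]⟩
    · exact ⟨x, by simp [o, hg, hg']⟩
  have hfin : {g : X.H | o g ≠ X.side g x}.Finite :=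
    (Set.finite_singleton h).subset fun g hg => by by_contra hgh; simp_all [o]
  obtain ⟨x', hx'⟩ := X.realize o x hcons hfin
  exact ⟨x', by simpa [o] using hx' h, fun g hg => by simpa [o, hg] using hx' g⟩

lemma eq_of_halfspace_eq {h g : X.H} {bh bg : Bool}
    (he : ∀ z, X.side h z = bh ↔ X.side g z = bg) : h = g := by
  by_cases hb : bh = bg
  · refine X.hyp_inj h g fun z => ?_
    have := he z
    revert this
    cases X.side h z <;> cases X.side g z <;> cases bh <;> cases bg <;> simp_all
  · refine X.hyp_inj' h g fun z => ?_
    have := he z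
    revert this
    cases X.side h z <;> cases X.side g z <;> cases bh <;> cases bg <;> simp_all

lemma exists_adj_dist_succ_eq {x y : X.V} (hxy : x ≠ y) :
    ∃ x', X.Adj x x' ∧ X.dist x' y + 1 = X.dist x y := by
  obtain ⟨h₀, hh₀⟩ : ∃ h, X.side h x ≠ X.side h y := by
    by_contra! hc
    exact hxy (X.vertex_ext x y hc)
  -- a separator whose `y`-halfspace is maximal can be crossed in one step from `x`
  obtain ⟨m, hm, hmax⟩ := Set.Finite.exists_maximalFor (fun g => {z | X.side g z = X.side g y})
    {g | X.side g x ≠ X.side g y} (X.sep_finite x y) ⟨h₀, hh₀⟩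
  have hmy : X.side m y = !X.side m x := Bool.eq_not_iff.2 (Ne.symm hm)
  obtain ⟨x', hx'm, hx'⟩ := exists_flip x m fun g hgm => by
    by_cases hg : X.side g x = X.side g y
    · exact ⟨y, hmy, hg.symm⟩
    by_contra! hno
    have hsub : {z | X.side m z = X.side m y} ⊆ {z | X.side g z = X.side g y} := fun z hz =>
      (Bool.eq_not_iff.2 (hno z (hz.trans hmy))).trans (Bool.eq_not_iff.2 (Ne.symm hg)).symm
    have heq := hmax hg hsub
    exact hgm (eq_of_halfspace_eq fun z => ⟨fun hz => heq hz, fun hz => hsub hz⟩)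
  refine ⟨x', adj_of_side_eq (by simp [hx'm]) fun g hg => (hx' g hg).symm, ?_⟩
  have hsep : X.sep x' y = (X.sep x y).erase m := by
    ext g
    by_cases hgm : g = m
    · subst hgm; simp [mem_sep, hx'm, hmy]
    · simp [mem_sep, hx' g hgm, hgm]
  rw [dist_eq_card_sep, dist_eq_card_sep, hsep, Finset.card_erase_add_one (mem_sep.2 hm)]

lemma exists_path_of_dist_eq : ∀ (n : ℕ) {x y : X.V}, X.dist x y = n →
    ∃ c : ℕ → X.V, c 0 = x ∧ c n = y ∧ ∀ q < n, X.Adj (c q) (c (q + 1))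
  | 0, x, y, h =>
    ⟨fun _ => x, rfl, eq_of_dist_eq_zero h, fun _ hq => absurd hq (Nat.not_lt_zero _)⟩
  | n + 1, x, y, h => by
    obtain ⟨x', hxx', hx'y⟩ := exists_adj_dist_succ_eq (X := X) (x := x) (y := y)
      fun e => by subst e; simp at h
    obtain ⟨c, hc0, hcn, hc⟩ := exists_path_of_dist_eq n (by omega : X.dist x' y = n)
    refine ⟨fun q => Nat.casesOn q x c, rfl, hcn, fun q hq => ?_⟩
    cases q with
    | zero => simpa [hc0] using hxx'
    | succ q => exact hc q (by omega)

lemma exists_side_ne_succ {c : ℕ → X.V} {h : X.H} {m n : ℕ} (hmn : m ≤ n)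
    (hne : X.side h (c m) ≠ X.side h (c n)) :
    ∃ q, m ≤ q ∧ q < n ∧ X.side h (c q) ≠ X.side h (c (q + 1)) := by
  induction n, hmn using Nat.le_induction with
  | base => exact absurd rfl hne
  | succ n hmn ih =>
    by_cases hn : X.side h (c n) = X.side h (c (n + 1))
    · obtain ⟨q, h1, h2, h3⟩ := ih (hn ▸ hne)
      exact ⟨q, h1, by omega, h3⟩
    · exact ⟨n, hmn, by omega, hn⟩

lemma dist_le_of_adj {c : ℕ → X.V} {m n : ℕ} (hmn : m ≤ n)
    (hc : ∀ q, m ≤ q → q < n → X.Adj (c q) (c (q + 1))) : X.dist (c m) (c n) ≤ n - m := by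
  induction n, hmn using Nat.le_induction with
  | base => simp
  | succ n hmn ih =>
    have h1 := ih fun q h1 h2 => hc q h1 (by omega)
    have h2 := dist_eq_one_iff.2 (hc n hmn (by omega))
    have h3 := dist_triangle (c m) (c n) (c (n + 1))
    omega

lemma side_eq_of_geodesic {c : ℕ → X.V} {n q : ℕ} (hq : q ≤ n) (hn : X.dist (c 0) (c n) = n)
    (hc : ∀ q < n, X.Adj (c q) (c (q + 1))) {h : X.H} (hh : X.side h (c 0) = X.side h (c n)) :
    X.side h (c q) = X.side h (c 0) := by
  have h1 := dist_le_of_adj (Nat.zero_le q) fun r _ hr => hc r (by omega)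
  have h2 := dist_le_of_adj hq fun r _ hr => hc r hr
  have h3 := dist_triangle (c 0) (c q) (c n)
  rcases (dist_add_dist_eq_iff (x := c 0) (z := c q) (y := c n)).1 (by omega) h with e | e
  · exact e
  · exact e.trans hh.symm

lemma carrier_nonempty (h : X.H) : (X.carrier h).Nonempty := by
  obtain ⟨x, hx⟩ := X.halfspace_nonempty h true
  obtain ⟨y, hy⟩ := X.halfspace_nonempty h false
  obtain ⟨c, hc0, hcn, hc⟩ := exists_path_of_dist_eq _ (rfl : X.dist x y = _)
  obtain ⟨q, -, hq, hside⟩ := exists_side_ne_succ (c := c) (h := h) (n := X.dist x y)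
    (Nat.zero_le _) (by rw [hc0, hcn, hx, hy]; simp)
  exact ⟨c q, c (q + 1), hc q hq, hside⟩

/-! ### Convexity of carriers and gates -/

lemma exists_side_eq_of_mem_carrier {c g : X.H} {v : X.V} (hv : v ∈ X.carrier c) (hg : g ≠ c)
    (b : Bool) : ∃ w, X.side c w = b ∧ X.side g w = X.side g v := by
  obtain ⟨v', hvv', hc⟩ := hv
  by_cases hb : X.side c v = b
  · exact ⟨v, hb, rfl⟩
  · refine ⟨v', ?_, (side_eq_of_adj hvv' hc hg).symm⟩
    revert hb hc
    cases X.side c v <;> cases X.side c v' <;> cases b <;> simp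

lemma mem_carrier_of_dist_add_dist_eq {c : X.H} {x y z : X.V} (hx : x ∈ X.carrier c)
    (hy : y ∈ X.carrier c) (hz : X.dist x z + X.dist z y = X.dist x y) : z ∈ X.carrier c := by
  obtain ⟨z', hz'c, hz'⟩ := exists_flip z c fun g hg => by
    rcases dist_add_dist_eq_iff.1 hz g with e | e
    · obtain ⟨w, h1, h2⟩ := exists_side_eq_of_mem_carrier hx hg (!X.side c z)
      exact ⟨w, h1, h2.trans e.symm⟩
    · obtain ⟨w, h1, h2⟩ := exists_side_eq_of_mem_carrier hy hg (!X.side c z)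
      exact ⟨w, h1, h2.trans e.symm⟩
  exact ⟨z', adj_of_side_eq (by simp [hz'c]) fun g hg => (hz' g hg).symm, by simp [hz'c]⟩

lemma exists_median (x y z : X.V) : ∃ m, ∀ h,
    (X.side h x = X.side h m ∧ X.side h y = X.side h m) ∨
    (X.side h y = X.side h m ∧ X.side h z = X.side h m) ∨
    (X.side h x = X.side h m ∧ X.side h z = X.side h m) := by
  let o : X.H → Bool := fun h => if X.side h x = X.side h y then X.side h x else X.side h z
  have hmaj : ∀ h, (X.side h x = o h ∧ X.side h y = o h) ∨
      (X.side h y = o h ∧ X.side h z = o h) ∨ (X.side h x = o h ∧ X.side h z = o h) := by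
    intro h
    simp only [o]
    split_ifs with he
    · exact Or.inl ⟨rfl, he.symm⟩
    · revert he
      cases X.side h x <;> cases X.side h y <;> cases X.side h z <;> simp
  have hcons : ∀ g g', ∃ v, X.side g v = o g ∧ X.side g' v = o g' := by
    intro g g'
    rcases hmaj g with ⟨a1, a2⟩ | ⟨a1, a2⟩ | ⟨a1, a2⟩ <;>
      rcases hmaj g' with ⟨b1, b2⟩ | ⟨b1, b2⟩ | ⟨b1, b2⟩ <;>
      first
        | exact ⟨x, by assumption, by assumption⟩
        | exact ⟨y, by assumption, by assumption⟩
        | exact ⟨z, by assumption, by assumption⟩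
  have hfin : {h : X.H | o h ≠ X.side h x}.Finite := by
    refine (X.sep_finite x z).subset fun h hh => ?_
    simp only [o, Set.mem_ofPred_eq] at hh ⊢
    split_ifs at hh with he
    · exact absurd rfl hh
    · exact Ne.symm hh
  obtain ⟨m, hm⟩ := X.realize o x hcons hfin
  exact ⟨m, fun h => by simpa only [hm h] using hmaj h⟩

def sepCarrier (X : CCC) (z : X.V) (c : X.H) : Set X.H :=
  {u | ∀ w ∈ X.carrier c, X.side u w ≠ X.side u z}

/-- The gate property of carriers. -/
lemma mem_sepCarrier_of_closest {z g : X.V} {c : X.H} (hg : g ∈ X.carrier c)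
    (hclosest : ∀ w ∈ X.carrier c, X.dist z g ≤ X.dist z w) {u : X.H} (hu : u ∈ X.sep z g) :
    u ∈ X.sepCarrier z c := by
  intro w hw hwu
  rw [mem_sep] at hu
  obtain ⟨m, hm⟩ := exists_median z g w
  have hmc : m ∈ X.carrier c := mem_carrier_of_dist_add_dist_eq hg hw <|
    dist_add_dist_eq_iff.2 fun h => by
      rcases hm h with ⟨-, e⟩ | ⟨e, -⟩ | ⟨-, e⟩ <;> simp [e]
  have hsub : X.sep z m ⊂ X.sep z g := by
    refine Finset.ssubset_iff_of_subset (fun h hh => ?_) |>.2 ⟨u, mem_sep.2 hu, ?_⟩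
    · rw [mem_sep] at hh ⊢
      rcases hm h with ⟨e, -⟩ | ⟨e, -⟩ | ⟨e, -⟩ <;> simp_all
    · rw [mem_sep, not_not]
      rcases hm u with ⟨e, -⟩ | ⟨e1, e2⟩ | ⟨e, -⟩ <;> simp_all
  have := Finset.card_lt_card hsub
  have := hclosest m hmc
  simp only [dist_eq_card_sep] at *
  omega

lemma mem_sepCarrier_of_side_eq {z z' : X.V} {c u : X.H} (hu : u ∈ X.sepCarrier z c)
    (he : X.side u z' = X.side u z) : u ∈ X.sepCarrier z' c :=
  fun w hw => he ▸ hu w hw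

noncomputable def distC (X : CCC) (z : X.V) (c : X.H) : ℕ :=
  sInf {d | ∃ w ∈ X.carrier c, X.dist z w = d}

lemma exists_dist_eq_distC (z : X.V) (c : X.H) : ∃ g ∈ X.carrier c, X.dist z g = X.distC z c :=
  Nat.sInf_mem (s := {d | ∃ w ∈ X.carrier c, X.dist z w = d})
    ⟨_, _, (carrier_nonempty c).some_mem, rfl⟩

lemma distC_le_dist {z w : X.V} {c : X.H} (hw : w ∈ X.carrier c) : X.distC z c ≤ X.dist z w :=
  Nat.sInf_le ⟨w, hw, rfl⟩

lemma distC_lt_of_mem_sepCarrier {z : X.V} {c u : X.H} (hu : u ∈ X.sepCarrier z c) :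
    X.distC z u < X.distC z c := by
  obtain ⟨g, hg, hgd⟩ := exists_dist_eq_distC z c
  obtain ⟨p, hp0, hpn, hp⟩ := exists_path_of_dist_eq _ (rfl : X.dist z g = _)
  obtain ⟨q, -, hq, hside⟩ := exists_side_ne_succ (c := p) (h := u) (n := X.dist z g)
    (Nat.zero_le _) (by rw [hp0, hpn]; exact Ne.symm (hu g hg))
  calc X.distC z u ≤ X.dist z (p q) := distC_le_dist ⟨p (q + 1), hp q hq, hside⟩
    _ ≤ q := by
      simpa [hp0] using dist_le_of_adj (c := p) (Nat.zero_le q) fun r _ hr => hp r (by omega)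
    _ < X.distC z c := hgd ▸ hq

/-! ### Contact -/

lemma exists_mem_carrier_side_eq {a h : X.H} {z₁ z₂ : X.V} (hh : X.side h z₁ = X.side h z₂)
    (ha : X.side a z₁ ≠ X.side a z₂) : ∃ w ∈ X.carrier a, X.side h w = X.side h z₁ := by
  obtain ⟨c, hc0, hcn, hc⟩ := exists_path_of_dist_eq _ (rfl : X.dist z₁ z₂ = _)
  subst hc0
  obtain ⟨q, -, hq, hside⟩ := exists_side_ne_succ (c := c) (h := a) (n := X.dist (c 0) z₂)
    (Nat.zero_le _) (by rwa [hcn])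
  exact ⟨c q, ⟨c (q + 1), hc q hq, hside⟩,
    side_eq_of_geodesic hq.le (by rw [hcn]) hc (by rwa [hcn])⟩

lemma inHalf_iff {a h : X.H} {b : Bool} :
    X.InHalf a h b ↔ ∀ w ∈ X.carrier a, X.side h w = b := by
  constructor
  · rintro ⟨hne, c₀, hc₀⟩ w ⟨w', hww', hw⟩
    by_contra hwb
    rw [← Ne, ← Bool.eq_not_iff] at hwb
    have hw' := (side_eq_of_adj hww' hw (Ne.symm hne)).symm.trans hwb
    exact hw ((hc₀ w hwb).trans (hc₀ w' hw').symm)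
  · intro hcar
    refine ⟨fun hah => ?_, ?_⟩
    · subst hah
      obtain ⟨w, w', hww', hw⟩ := carrier_nonempty a
      exact hw ((hcar w ⟨w', hww', hw⟩).trans (hcar w' ⟨w, hww'.symm, Ne.symm hw⟩).symm)
    · obtain ⟨z₀, hz₀⟩ := X.halfspace_nonempty h (!b)
      refine ⟨X.side a z₀, fun z hz => by_contra fun hza => ?_⟩
      obtain ⟨w, hw, hwh⟩ := exists_mem_carrier_side_eq (hz.trans hz₀.symm) hza
      simpa [hwh, hz] using hcar w hw

lemma Contact.symm {a b : X.H} (h : X.Contact a b) : X.Contact b a := by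
  obtain ⟨hne, hsep⟩ := h
  refine ⟨Ne.symm hne, ?_⟩
  rintro ⟨h'', b₀, hi1, hi2⟩
  exact hsep ⟨h'', !b₀, hi2, by simpa using hi1⟩

lemma contact_iff {a b : X.H} :
    X.Contact a b ↔ a ≠ b ∧ ∃ w, w ∈ X.carrier a ∧ w ∈ X.carrier b := by
  refine ⟨fun hab => ⟨hab.1, ?_⟩, fun ⟨hne, w, hwa, hwb⟩ => ⟨hne, ?_⟩⟩
  · obtain ⟨⟨x, y⟩, ⟨hx, hy⟩, hmin⟩ := exists_minimalFor_of_wellFoundedLT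
      (fun p : X.V × X.V => p.1 ∈ X.carrier a ∧ p.2 ∈ X.carrier b) (fun p => X.dist p.1 p.2)
      ⟨(_, _), (carrier_nonempty a).some_mem, (carrier_nonempty b).some_mem⟩
    have hmin' : ∀ x' ∈ X.carrier a, ∀ y' ∈ X.carrier b, X.dist x y ≤ X.dist x' y' :=
      fun x' hx' y' hy' => (le_total _ _).elim (hmin (j := (x', y')) ⟨hx', hy'⟩) id
    by_contra! hno
    obtain ⟨h, hh⟩ : ∃ h, X.side h x ≠ X.side h y := by
      by_contra! hc
      exact hno x hx ((X.vertex_ext x y hc) ▸ hy)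
    -- both carriers lie on their own side of `h`, by the gate property
    have ha : ∀ w ∈ X.carrier a, X.side h w ≠ X.side h y :=
      mem_sepCarrier_of_closest hx
        (fun w hw => by rw [dist_comm, dist_comm y]; exact hmin' w hw y hy) (mem_sep.2 (Ne.symm hh))
    have hb : ∀ w ∈ X.carrier b, X.side h w ≠ X.side h x :=
      mem_sepCarrier_of_closest hy (fun w hw => hmin' x hx w hw) (mem_sep.2 hh)
    refine hab.2 ⟨h, X.side h x, inHalf_iff.2 fun w hw => ?_, inHalf_iff.2 fun w hw => ?_⟩
    · have := ha w hw
      revert this hh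
      cases X.side h w <;> cases X.side h x <;> cases X.side h y <;> simp
    · exact Bool.eq_not_iff.2 (hb w hw)
  · rintro ⟨h, β, ha, hb⟩
    have h1 := inHalf_iff.1 ha w hwa
    have h2 := inHalf_iff.1 hb w hwb
    simp_all

lemma eq_or_contact_of_side_ne {c u : X.H} {x y : X.V} (hx : x ∈ X.carrier c)
    (hy : y ∈ X.carrier c) (hu : X.side u x ≠ X.side u y) : u = c ∨ X.Contact u c := by
  refine or_iff_not_imp_left.2 fun hne => ⟨hne, ?_⟩
  rintro ⟨h, β, ⟨-, c₀, hc₀⟩, hc⟩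
  have hc' := inHalf_iff.1 hc
  exact hu ((hc₀ x (hc' x hx)).trans (hc₀ y (hc' y hy)).symm)

lemma eq_or_contact_of_mem_sepCarrier {z : X.V} {h c u : X.H} (hz : z ∈ X.carrier h)
    (hhc : h = c ∨ X.Contact h c) (hu : u ∈ X.sepCarrier z c) : u = h ∨ X.Contact u h := by
  obtain ⟨w, hwh, hwc⟩ : ∃ w, w ∈ X.carrier h ∧ w ∈ X.carrier c :=
    hhc.elim (fun e => ⟨z, hz, e ▸ hz⟩) fun hc => (contact_iff.1 hc).2
  exact eq_or_contact_of_side_ne hz hwh (Ne.symm (hu w hwc))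

lemma exists_eq_or_contact_of_cchain : ∀ {d : ℕ} {cc : ℕ → X.H} {x y : X.V},
    X.CChain cc d → x ∈ X.carrier (cc 0) → y ∈ X.carrier (cc d) →
    ∀ {u : X.H}, X.side u x ≠ X.side u y → ∃ m ≤ d, u = cc m ∨ X.Contact u (cc m)
  | 0, _, _, _, _, hx, hy, _, hu => ⟨0, le_rfl, eq_or_contact_of_side_ne hx hy hu⟩
  | d + 1, cc, x, y, hch, hx, hy, u, hu => by
    obtain ⟨-, w, hw0, hw1⟩ := contact_iff.1 (hch 0 (Nat.succ_pos d))
    by_cases hxw : X.side u x = X.side u w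
    · obtain ⟨m, hm, hum⟩ := exists_eq_or_contact_of_cchain (cc := fun q => cc (q + 1))
        (fun q hq => hch (q + 1) (by omega)) hw1 hy (hxw ▸ hu)
      exact ⟨m + 1, by omega, hum⟩
    · exact ⟨0, Nat.zero_le _, eq_or_contact_of_side_ne hx hw0 hxw⟩

lemma CChain.reverse {c : ℕ → X.H} {n : ℕ} (h : X.CChain c n) :
    X.CChain (fun q => c (n - q)) n := fun q hq => by
  have := (h (n - (q + 1)) (by omega)).symm
  rwa [show n - (q + 1) + 1 = n - q by omega] at this

lemma cdist_le_of_cchain {c : ℕ → X.H} {n : ℕ} {h h' : X.H} (h0 : c 0 = h) (hn : c n = h')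
    (hc : X.CChain c n) : X.cdist h h' ≤ n :=
  sInf_le ⟨n, c, h0, hn, hc, rfl⟩

lemma ldist_le_of_cchain {γ : ℕ → X.V} {c : ℕ → X.H} {n : ℕ} {h h' : X.H} (h0 : c 0 = h)
    (hn : c n = h') (hW : ∀ q ≤ n, c q ∈ X.WSet γ) (hc : X.CChain c n) :
    X.ldist γ h h' ≤ n :=
  sInf_le ⟨n, c, h0, hn, hW, hc, rfl⟩

lemma cdist_le_ldist (γ : ℕ → X.V) (h h' : X.H) : X.cdist h h' ≤ X.ldist γ h h' :=
  sInf_le_sInf fun _ ⟨n, c, h0, hn, _, hc, he⟩ => ⟨n, c, h0, hn, hc, he⟩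

lemma exists_cchain_eq_cdist {h h' : X.H}
    (hex : ∃ (n : ℕ) (c : ℕ → X.H), c 0 = h ∧ c n = h' ∧ X.CChain c n) :
    ∃ (n : ℕ) (c : ℕ → X.H),
      c 0 = h ∧ c n = h' ∧ X.CChain c n ∧ X.cdist h h' = n := by
  obtain ⟨n₀, c₀, h0, hn, hc⟩ := hex
  obtain ⟨n, c, h0, hn, hc, he⟩ := csInf_mem (s := {e : ℕ∞ | ∃ (n : ℕ) (c : ℕ → X.H),
      c 0 = h ∧ c n = h' ∧ X.CChain c n ∧ e = n})
    ⟨_, n₀, c₀, h0, hn, hc, rfl⟩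
  exact ⟨n, c, h0, hn, hc, he⟩

/-! ### Hyperplanes dual to a geodesic ray -/

lemma side_eq_of_not_mem_WSet {γ : ℕ → X.V} {u : X.H} (hu : u ∉ X.WSet γ) (m n : ℕ) :
    X.side u (γ m) = X.side u (γ n) := by
  wlog hmn : m ≤ n generalizing m n
  · exact (this n m (by omega)).symm
  by_contra hne
  obtain ⟨q, -, -, hq⟩ := exists_side_ne_succ hmn hne
  exact hu ⟨q, hq⟩

lemma IsGeodesicRay.adj_succ {γ : ℕ → X.V} (hγ : X.IsGeodesicRay γ) (i : ℕ) :
    X.Adj (γ i) (γ (i + 1)) :=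
  dist_eq_one_iff.1 (by rw [hγ i (i + 1) (by omega)]; omega)

def IsQIProjection (X : CCC) (γ : ℕ → X.V) (Hd : ℕ → X.H) : Prop :=
  ∃ lam eps : ℕ, 1 ≤ lam ∧
    (∀ i j : ℕ,
      (Nat.dist i j : ℕ∞) ≤ (lam : ℕ∞) * X.cdist (Hd i) (Hd j) + (eps : ℕ∞) ∧
      X.cdist (Hd i) (Hd j) ≤ (lam : ℕ∞) * (Nat.dist i j : ℕ∞) + (eps : ℕ∞)) ∧
    (∀ h ∈ X.WSet γ, ∀ h' ∈ X.WSet γ,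
      X.ldist γ h h' ≤ (lam : ℕ∞) * X.cdist h h' + (eps : ℕ∞) ∧
      X.cdist h h' ≤ (lam : ℕ∞) * X.ldist γ h h' + (eps : ℕ∞))

def HasBiclique (X : CCC) (γ : ℕ → X.V) (p : ℕ) : Prop :=
  ∃ A B : Finset X.H, A.card = p ∧ B.card = p ∧ Disjoint A B ∧
    (∀ a ∈ A, a ∈ X.WSet γ) ∧ (∀ b ∈ B, b ∈ X.WSet γ) ∧
    ∀ a ∈ A, ∀ b ∈ B, X.Contact a b

section Ray

variable {γ : ℕ → X.V} {Hd : ℕ → X.H} (hγ : X.IsGeodesicRay γ)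
  (hHd : ∀ i, X.side (Hd i) (γ i) ≠ X.side (Hd i) (γ (i + 1)))
include hγ hHd

lemma mem_carrier_Hd (i : ℕ) : γ i ∈ X.carrier (Hd i) :=
  ⟨γ (i + 1), hγ.adj_succ i, hHd i⟩

lemma mem_carrier_Hd_succ (i : ℕ) : γ (i + 1) ∈ X.carrier (Hd i) :=
  ⟨γ i, (hγ.adj_succ i).symm, Ne.symm (hHd i)⟩

lemma mem_WSet_iff {u : X.H} : u ∈ X.WSet γ ↔ ∃ n, u = Hd n :=
  ⟨fun ⟨n, hn⟩ =>
      ⟨n, by_contra fun hne => hn (side_eq_of_adj (hγ.adj_succ n) (hHd n) hne)⟩,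
    fun ⟨n, hn⟩ => ⟨n, hn ▸ hHd n⟩⟩

lemma sep_eq_image_Ico {m n : ℕ} (hmn : m ≤ n) :
    X.sep (γ m) (γ n) = (Finset.Ico m n).image Hd := by
  refine Finset.eq_of_subset_of_card_le (fun u hu => ?_) ?_
  · obtain ⟨q, h1, h2, hq⟩ := exists_side_ne_succ hmn (mem_sep.1 hu)
    have huq : u = Hd q := by_contra fun hne => hq (side_eq_of_adj (hγ.adj_succ q) (hHd q) hne)
    exact Finset.mem_image.2 ⟨q, Finset.mem_Ico.2 ⟨h1, h2⟩, huq.symm⟩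
  · calc ((Finset.Ico m n).image Hd).card ≤ (Finset.Ico m n).card := Finset.card_image_le
      _ = (X.sep (γ m) (γ n)).card := by rw [Nat.card_Ico, ← dist_eq_card_sep, hγ m n hmn]

lemma Hd_injective : Function.Injective Hd := by
  intro i j hij
  by_contra hne
  have hinj : Set.InjOn Hd (Finset.Ico 0 (max i j + 1)) := by
    rw [← Finset.card_image_iff, ← sep_eq_image_Ico hγ hHd (Nat.zero_le _),
      ← dist_eq_card_sep, hγ 0 _ (Nat.zero_le _), Nat.card_Ico]
  exact hne (hinj (by simp) (by simp) hij)

lemma mem_sep_Hd_iff {i j k : ℕ} :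
    Hd k ∈ X.sep (γ i) (γ j) ↔ min i j ≤ k ∧ k < max i j := by
  wlog hij : i ≤ j generalizing i j
  · rw [sep_comm, min_comm, max_comm]
    exact this (by omega)
  rw [sep_eq_image_Ico hγ hHd hij, (Hd_injective hγ hHd).mem_finset_image, Finset.mem_Ico,
    min_eq_left hij, max_eq_right hij]

lemma side_Hd_of_le {k m : ℕ} (hm : m ≤ k) : X.side (Hd k) (γ m) = X.side (Hd k) (γ k) := by
  by_contra hne
  have := (mem_sep_Hd_iff hγ hHd).1 (mem_sep.2 hne)
  omega

lemma side_Hd_of_lt {k m : ℕ} (hm : k < m) :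
    X.side (Hd k) (γ m) = X.side (Hd k) (γ (k + 1)) := by
  by_contra hne
  have := (mem_sep_Hd_iff hγ hHd).1 (mem_sep.2 hne)
  omega

lemma side_eq_before_or_after {u : X.H} (hu : u ∈ X.WSet γ) (n : ℕ) :
    (∀ k ≤ n, X.side u (γ k) = X.side u (γ n)) ∨
      (∀ k ≥ n, X.side u (γ k) = X.side u (γ n)) := by
  obtain ⟨m, rfl⟩ := (mem_WSet_iff hγ hHd).1 hu
  rcases le_or_gt n m with hnm | hmn
  · exact Or.inl fun k hk => by
      rw [side_Hd_of_le hγ hHd (hk.trans hnm), side_Hd_of_le hγ hHd hnm]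
  · exact Or.inr fun k hk => by
      rw [side_Hd_of_lt hγ hHd (hmn.trans_le hk), side_Hd_of_lt hγ hHd hmn]

lemma contact_Hd_succ (i : ℕ) : X.Contact (Hd i) (Hd (i + 1)) :=
  contact_iff.2 ⟨fun e => by simpa using Hd_injective hγ hHd e,
    γ (i + 1), mem_carrier_Hd_succ hγ hHd i, mem_carrier_Hd hγ hHd (i + 1)⟩

lemma exists_cchain_Hd (i j : ℕ) : ∃ c : ℕ → X.H, c 0 = Hd i ∧ c (Nat.dist i j) = Hd j ∧
    X.CChain c (Nat.dist i j) ∧ ∀ q, c q ∈ X.WSet γ := by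
  wlog hij : i ≤ j generalizing i j
  · obtain ⟨c, h0, hn, hc, hW⟩ := this j i (by omega)
    rw [Nat.dist_comm] at hn hc
    exact ⟨fun q => c (Nat.dist i j - q), by simpa using hn, by simpa using h0, hc.reverse,
      fun q => hW _⟩
  refine ⟨fun q => Hd (i + q), by simp,
    show Hd (i + Nat.dist i j) = Hd j by rw [Nat.dist_eq_sub_of_le hij, Nat.add_sub_cancel' hij],
    fun q _ => contact_Hd_succ hγ hHd (i + q), fun q => (mem_WSet_iff hγ hHd).2 ⟨_, rfl⟩⟩

lemma natDist_le_of_cchain {C : ℕ}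
    (hC : ∀ c (S : Finset ℕ), (∀ k ∈ S, Hd k = c ∨ X.Contact (Hd k) c) → S.card ≤ C)
    {i j d : ℕ} {cc : ℕ → X.H} (hch : X.CChain cc d) (h0 : cc 0 = Hd i) (hd : cc d = Hd j) :
    Nat.dist i j ≤ (d + 1) * C := by
  set I := Finset.Ico (min i j) (max i j)
  have hcover : I ⊆ (Finset.range (d + 1)).biUnion
      fun m => I.filter fun k => Hd k = cc m ∨ X.Contact (Hd k) (cc m) := by
    intro k hk
    obtain ⟨m, hm, hkm⟩ := exists_eq_or_contact_of_cchain hch (h0 ▸ mem_carrier_Hd hγ hHd i)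
      (hd ▸ mem_carrier_Hd hγ hHd j)
      (mem_sep.1 ((mem_sep_Hd_iff hγ hHd).2 (Finset.mem_Ico.1 hk)))
    exact Finset.mem_biUnion.2
      ⟨m, Finset.mem_range.2 (by omega), Finset.mem_filter.2 ⟨hk, hkm⟩⟩
  calc Nat.dist i j = I.card := by simp only [I, Nat.card_Ico, Nat.dist]; omega
    _ ≤ _ := Finset.card_le_card hcover
    _ ≤ (Finset.range (d + 1)).card * C :=
        Finset.card_biUnion_le_card_mul _ _ _ fun m _ =>
          hC _ _ fun k hk => (Finset.mem_filter.1 hk).2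
    _ = (d + 1) * C := by rw [Finset.card_range]

lemma isQIProjection_of_card_le {C : ℕ}
    (hC : ∀ c (S : Finset ℕ), (∀ k ∈ S, Hd k = c ∨ X.Contact (Hd k) c) → S.card ≤ C) :
    X.IsQIProjection γ Hd := by
  have hlower : ∀ i j,
      (Nat.dist i j : ℕ∞) ≤ ((C + 1 : ℕ) : ℕ∞) * X.cdist (Hd i) (Hd j) + (C + 1 : ℕ) := by
    intro i j
    obtain ⟨c, h0, hn, hc, -⟩ := exists_cchain_Hd hγ hHd i j
    obtain ⟨d, c', h0', hd', hc', hcd⟩ := exists_cchain_eq_cdist ⟨_, c, h0, hn, hc⟩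
    have := natDist_le_of_cchain hγ hHd hC hc' h0' hd'
    rw [hcd]
    exact_mod_cast (by nlinarith : Nat.dist i j ≤ (C + 1) * d + (C + 1))
  have hle : ∀ e : ℕ∞, e ≤ ((C + 1 : ℕ) : ℕ∞) * e + (C + 1 : ℕ) := fun e =>
    le_add_right (le_mul_of_one_le_left' (by exact_mod_cast Nat.le_add_left 1 C))
  refine ⟨C + 1, C + 1, Nat.le_add_left 1 C, fun i j => ⟨hlower i j, ?_⟩,
    fun h hh h' hh' => ?_⟩
  · obtain ⟨c, h0, hn, hc, -⟩ := exists_cchain_Hd hγ hHd i j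
    exact (cdist_le_of_cchain h0 hn hc).trans (hle _)
  · obtain ⟨a, rfl⟩ := (mem_WSet_iff hγ hHd).1 hh
    obtain ⟨b, rfl⟩ := (mem_WSet_iff hγ hHd).1 hh'
    obtain ⟨c, h0, hn, hc, hW⟩ := exists_cchain_Hd hγ hHd a b
    exact ⟨(ldist_le_of_cchain h0 hn (fun q _ => hW q) hc).trans (hlower a b),
      (cdist_le_ldist γ _ _).trans (hle _)⟩

end Ray

/-! ### Hyperplanes contacting many dual hyperplanes -/

lemma exists_forall_le_card_filter (S : Finset ℕ) {p t : ℕ} (h : 2 * p + t < S.card) :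
    ∃ i, ∀ k ≤ t,
      p ≤ (S.filter (· < i + k)).card ∧ p ≤ (S.filter (i + k < ·)).card := by
  have hstep : ∀ n m, (S.filter (· < n + m)).card ≤ (S.filter (· < n)).card + m := by
    intro n m
    calc (S.filter (· < n + m)).card ≤ (S.filter (· < n) ∪ Finset.Ico n (n + m)).card := by
          refine Finset.card_le_card fun k hk => ?_
          rw [Finset.mem_filter] at hk
          rcases lt_or_ge k n with hkn | hkn
          · exact Finset.mem_union_left _ (Finset.mem_filter.2 ⟨hk.1, hkn⟩)
          · exact Finset.mem_union_right _ (Finset.mem_Ico.2 ⟨hkn, hk.2⟩)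
      _ ≤ _ := by simpa using Finset.card_union_le (S.filter (· < n)) (Finset.Ico n (n + m))
  have hex : ∃ n, p ≤ (S.filter (· < n)).card := by
    refine ⟨S.sup id + 1, ?_⟩
    have : S.card ≤ (S.filter (· < S.sup id + 1)).card := Finset.card_le_card fun k hk =>
      Finset.mem_filter.2 ⟨hk, Nat.lt_succ_of_le (Finset.le_sup (f := id) hk)⟩
    omega
  obtain ⟨i, hpi, hip⟩ :
      ∃ i, p ≤ (S.filter (· < i)).card ∧ (S.filter (· < i)).card ≤ p := by
    refine ⟨Nat.find hex, Nat.find_spec hex, ?_⟩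
    rcases hn : Nat.find hex with _ | j
    · simp
    · have := Nat.find_min hex (by omega : j < Nat.find hex)
      have := hstep j 1
      omega
  refine ⟨i, fun k hk => ⟨hpi.trans (Finset.card_le_card fun a ha => ?_), ?_⟩⟩
  · rw [Finset.mem_filter] at ha ⊢
    exact ⟨ha.1, by omega⟩
  · have hS : S.card ≤ (S.filter (· < i + (t + 1))).card + (S.filter (i + k < ·)).card := by
      refine (Finset.card_le_card fun a ha => ?_).trans (Finset.card_union_le _ _)
      rcases lt_or_ge a (i + (t + 1)) with hai | hai
      · exact Finset.mem_union_left _ (Finset.mem_filter.2 ⟨ha, hai⟩)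
      · exact Finset.mem_union_right _ (Finset.mem_filter.2 ⟨ha, by omega⟩)
    have := hstep i (t + 1)
    omega

section Touching

variable {γ : ℕ → X.V} {Hd : ℕ → X.H} (hγ : X.IsGeodesicRay γ)
  (hHd : ∀ i, X.side (Hd i) (γ i) ≠ X.side (Hd i) (γ (i + 1)))
  {S : Finset ℕ} {cs : X.H} (hcs : ∀ k ∈ S, Hd k = cs ∨ X.Contact (Hd k) cs)
  (hmin : ∀ h, (∀ k ∈ S, Hd k = h ∨ X.Contact (Hd k) h) →
    X.distC (γ 0) cs ≤ X.distC (γ 0) h)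
include hγ hHd hcs hmin

/-- A hyperplane separating `γ` from the carrier of `cs` without crossing `γ` would contact
every `Hd k`, `k ∈ S`, while being closer to `γ 0` than `cs`. -/
lemma sepCarrier_subset_WSet (n : ℕ) : X.sepCarrier (γ n) cs ⊆ X.WSet γ := by
  intro u hu
  by_contra hW
  have hu' : ∀ k, u ∈ X.sepCarrier (γ k) cs := fun k =>
    mem_sepCarrier_of_side_eq hu (side_eq_of_not_mem_WSet hW k n)
  have htouch : ∀ k ∈ S, Hd k = u ∨ X.Contact (Hd k) u := fun k hk =>
    match eq_or_contact_of_mem_sepCarrier (mem_carrier_Hd hγ hHd k) (hcs k hk) (hu' k) with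
    | .inl e => absurd (e ▸ ⟨k, hHd k⟩) hW
    | .inr hc => Or.inr hc.symm
  exact absurd (hmin u htouch) (not_le.2 (distC_lt_of_mem_sepCarrier (hu' 0)))

lemma hasBiclique_of_sepCarrier {p n : ℕ} {T : Finset ℕ} {B : Finset X.H} (hTS : T ⊆ S)
    (hB : ∀ b ∈ B, b ∈ X.sepCarrier (γ n) cs ∧ ∀ k ∈ T, X.side b (γ k) = X.side b (γ n))
    (hTB : ∀ k ∈ T, Hd k ∉ B) (hpT : p ≤ T.card) (hpB : p ≤ B.card) :
    X.HasBiclique γ p := by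
  obtain ⟨T', hT', rfl⟩ := Finset.exists_subset_card_eq hpT
  obtain ⟨B', hB', hcard⟩ := Finset.exists_subset_card_eq hpB
  refine ⟨T'.image Hd, B', Finset.card_image_of_injective _ (Hd_injective hγ hHd), hcard, ?_,
    ?_, fun b hb => sepCarrier_subset_WSet hγ hHd hcs hmin n (hB b (hB' hb)).1, ?_⟩
  · rw [Finset.disjoint_left]
    rintro _ ha hb
    obtain ⟨k, hk, rfl⟩ := Finset.mem_image.1 ha
    exact hTB k (hT' hk) (hB' hb)
  · rintro _ ha
    obtain ⟨k, -, rfl⟩ := Finset.mem_image.1 ha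
    exact ⟨k, hHd k⟩
  · rintro _ ha b hb
    obtain ⟨k, hk, rfl⟩ := Finset.mem_image.1 ha
    obtain ⟨hbn, hbT⟩ := hB b (hB' hb)
    rcases eq_or_contact_of_mem_sepCarrier (mem_carrier_Hd hγ hHd k) (hcs k (hTS (hT' hk)))
      (mem_sepCarrier_of_side_eq hbn (hbT k (hT' hk))) with e | hc
    · exact absurd (e ▸ hB' hb) (hTB k (hT' hk))
    · exact hc.symm

lemma distC_le_of_not_hasBiclique {p n : ℕ} (hp : ¬ X.HasBiclique γ p)
    (hbelow : p ≤ (S.filter (· < n)).card) (habove : p ≤ (S.filter (n < ·)).card) :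
    X.distC (γ n) cs ≤ 2 * p := by
  obtain ⟨g, hg, hgd⟩ := exists_dist_eq_distC (γ n) cs
  have hgate : ∀ u ∈ X.sep (γ n) g, u ∈ X.sepCarrier (γ n) cs :=
    fun u => mem_sepCarrier_of_closest hg fun w hw => hgd ▸ distC_le_dist hw
  set B₁ := (X.sep (γ n) g).filter fun b => ∀ k ≤ n, X.side b (γ k) = X.side b (γ n)
  set B₂ := (X.sep (γ n) g).filter fun b => ∀ k ≥ n, X.side b (γ k) = X.side b (γ n)
  have h₁ : B₁.card < p := not_le.1 fun hpB => hp <|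
    hasBiclique_of_sepCarrier hγ hHd hcs hmin (T := S.filter (· < n)) (B := B₁)
      (Finset.filter_subset _ _)
      (fun b hb => ⟨hgate b (Finset.mem_filter.1 hb).1, fun k hk =>
        (Finset.mem_filter.1 hb).2 k (Finset.mem_filter.1 hk).2.le⟩)
      (fun k hk hkB => hHd k <| by
        have hkn := (Finset.mem_filter.1 hk).2
        rw [(Finset.mem_filter.1 hkB).2 k hkn.le, ← side_Hd_of_lt hγ hHd hkn])
      hbelow hpB
  have h₂ : B₂.card < p := not_le.1 fun hpB => hp <|
    hasBiclique_of_sepCarrier hγ hHd hcs hmin (T := S.filter (n < ·)) (B := B₂)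
      (Finset.filter_subset _ _)
      (fun b hb => ⟨hgate b (Finset.mem_filter.1 hb).1, fun k hk =>
        (Finset.mem_filter.1 hb).2 k (Finset.mem_filter.1 hk).2.le⟩)
      (fun k hk hkB => hHd k <| by
        have hkn := (Finset.mem_filter.1 hk).2
        rw [(Finset.mem_filter.1 hkB).2 k hkn.le, (Finset.mem_filter.1 hkB).2 (k + 1) (by omega)])
      habove hpB
  have hcover : X.sep (γ n) g ⊆ B₁ ∪ B₂ := fun u hu =>
    (side_eq_before_or_after hγ hHd
      (sepCarrier_subset_WSet hγ hHd hcs hmin n (hgate u hu)) n).elim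
      (fun h => Finset.mem_union_left _ (Finset.mem_filter.2 ⟨hu, h⟩))
      (fun h => Finset.mem_union_right _ (Finset.mem_filter.2 ⟨hu, h⟩))
  have := (Finset.card_le_card hcover).trans (Finset.card_union_le _ _)
  rw [← dist_eq_card_sep, hgd] at this
  omega

end Touching

lemma exists_forall_dist_carrier_le {γ : ℕ → X.V} {Hd : ℕ → X.H} (hγ : X.IsGeodesicRay γ)
    (hHd : ∀ i, X.side (Hd i) (γ i) ≠ X.side (Hd i) (γ (i + 1))) {p t : ℕ}
    (hp : ¬ X.HasBiclique γ p) {c : X.H} {S : Finset ℕ}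
    (hS : ∀ k ∈ S, Hd k = c ∨ X.Contact (Hd k) c) (hcard : 2 * p + t < S.card) :
    ∃ (h : X.H) (i : ℕ), ∀ k ≤ t,
      ∃ y ∈ X.carrier h, X.dist (γ (i + k)) y ≤ 2 * p := by
  obtain ⟨cs, hcs, hmin⟩ := exists_minimalFor_of_wellFoundedLT
    (fun h => ∀ k ∈ S, Hd k = h ∨ X.Contact (Hd k) h) (X.distC (γ 0)) ⟨c, hS⟩
  have hmin' : ∀ h, (∀ k ∈ S, Hd k = h ∨ X.Contact (Hd k) h) →
      X.distC (γ 0) cs ≤ X.distC (γ 0) h := fun h hh => (le_total _ _).elim (hmin hh) id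
  obtain ⟨i, hi⟩ := exists_forall_le_card_filter S hcard
  refine ⟨cs, i, fun k hk => ?_⟩
  obtain ⟨y, hy, hyd⟩ := exists_dist_eq_distC (γ (i + k)) cs
  exact ⟨y, hy,
    hyd ▸ distC_le_of_not_hasBiclique hγ hHd hcs hmin' hp (hi k hk).1 (hi k hk).2⟩

end CCC

/-- **Projection trichotomy I** (Theorem 3.1).  Let `γ` be a combinatorial
geodesic ray in the CAT(0) cube complex `X`, with `Hd i` the hyperplane dual
to `γ([i,i+1])`.  Then either (1) the projection `γ*` of `γ` to the contact
graph and the full subgraph `Λ(γ)` spanned by `W(γ)` include into `C(X)`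
quasi-isometrically, or (2) `Λ(γ)` contains `K_{p,p}` for all `p`, or (3)
there is `R` such that `γ` has arbitrarily long connected subpaths in the
`R`-neighborhood of a single hyperplane carrier. -/
theorem projection_trichotomy_I (X : CCC) (γ : ℕ → X.V) (hγ : X.IsGeodesicRay γ)
    (Hd : ℕ → X.H) (hHd : ∀ i, X.side (Hd i) (γ i) ≠ X.side (Hd i) (γ (i + 1))) :
    -- (1) both inclusions are quasi-isometric embeddings
    (∃ lam eps : ℕ, 1 ≤ lam ∧
      (∀ i j : ℕ,
        (Nat.dist i j : ℕ∞) ≤ (lam : ℕ∞) * X.cdist (Hd i) (Hd j) + (eps : ℕ∞) ∧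
        X.cdist (Hd i) (Hd j) ≤ (lam : ℕ∞) * (Nat.dist i j : ℕ∞) + (eps : ℕ∞)) ∧
      (∀ h ∈ X.WSet γ, ∀ h' ∈ X.WSet γ,
        X.ldist γ h h' ≤ (lam : ℕ∞) * X.cdist h h' + (eps : ℕ∞) ∧
        X.cdist h h' ≤ (lam : ℕ∞) * X.ldist γ h h' + (eps : ℕ∞))) ∨
    -- (2) `Λ(γ)` contains complete bipartite subgraphs `K_{p,p}` for all `p`
    (∀ p : ℕ, ∃ A B : Finset X.H, A.card = p ∧ B.card = p ∧ Disjoint A B ∧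
      (∀ a ∈ A, a ∈ X.WSet γ) ∧ (∀ b ∈ B, b ∈ X.WSet γ) ∧
      ∀ a ∈ A, ∀ b ∈ B, X.Contact a b) ∨
    -- (3) long subpaths of `γ` near a hyperplane carrier
    (∃ R : ℕ, ∀ t : ℕ, ∃ (h : X.H) (i : ℕ), ∀ k ≤ t,
      ∃ y ∈ X.carrier h, X.dist (γ (i + k)) y ≤ R) := by
  by_cases hK : ∀ p, X.HasBiclique γ p
  · exact Or.inr (Or.inl hK)
  by_cases hR : ∃ R : ℕ, ∀ t : ℕ, ∃ (h : X.H) (i : ℕ), ∀ k ≤ t,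
      ∃ y ∈ X.carrier h, X.dist (γ (i + k)) y ≤ R
  · exact Or.inr (Or.inr hR)
  obtain ⟨p, hp⟩ := not_forall.1 hK
  obtain ⟨t, ht⟩ : ∃ t, ∀ (h : X.H) (i : ℕ), ∃ k ≤ t, ∀ y ∈ X.carrier h,
      2 * p < X.dist (γ (i + k)) y := by
    push Not at hR
    exact hR (2 * p)
  refine Or.inl (CCC.isQIProjection_of_card_le hγ hHd (C := 2 * p + t) fun c S hS => ?_)
  by_contra! hcard
  obtain ⟨h, i, hnear⟩ := CCC.exists_forall_dist_carrier_le hγ hHd hp hS hcard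
  obtain ⟨k, hk, hfar⟩ := ht h i
  obtain ⟨y, hy, hyd⟩ := hnear k hk
  exact (hfar y hy).not_ge hyd
end

section
/- Let X be a CAT(0) cube complex, let γ be a combinatorial geodesic ray in X, let H_i be the hyperplane dual to γ([i,i+1]), and let Λ(γ) be the full subgraph of the contact graph C(X) spanned by W(γ). Suppose (a) there exists B' < ∞ such that whenever Λ(γ) contains a complete bipartite subgraph K_{p,p} one has p ≤ B', and (b) for every r ≥ 0 there exists B''(r) < ∞ such that every connected subpath of γ contained in N_r(N(H)), for any hyperplane H, has length at most B''(r). Then there exists B < ∞ such that if H_i and H_j contact, then |i - j| ≤ B. -/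
namespace CCC

open Finset
open scoped Classical

variable {X : CCC} {γ : ℕ → X.V} {Hd : ℕ → X.H}

private lemma bool_cases (a c : Bool) : a = c ∨ a = !c := by
  cases a <;> cases c <;> simp

private lemma bool_not_self {a : Bool} : a ≠ !a := by cases a <;> simp

private lemma bool_ne_iff {a b : Bool} : a ≠ b ↔ a = !b := by
  cases a <;> cases b <;> simp

lemma contact_symm {h h' : X.H} (hc : X.Contact h h') : X.Contact h' h := by
  refine ⟨hc.1.symm, ?_⟩
  rintro ⟨w, b, hI, hJ⟩
  exact hc.2 ⟨w, !b, hJ, by rwa [Bool.not_not]⟩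

lemma crosses_symm {h h' : X.H} (hc : X.Crosses h h') : X.Crosses h' h :=
  fun b b' => (hc b' b).imp fun _ hx => ⟨hx.2, hx.1⟩

/-- The finite set of hyperplanes separating two 0-cubes. -/
noncomputable def sepF (X : CCC) (x y : X.V) : Finset X.H := (X.sep_finite x y).toFinset

lemma mem_sepF {x y : X.V} {h : X.H} : h ∈ sepF X x y ↔ X.side h x ≠ X.side h y :=
  Set.Finite.mem_toFinset _

lemma dist_eq_card (x y : X.V) : X.dist x y = (sepF X x y).card := rfl

section

variable (hγ : X.IsGeodesicRay γ)
include hγ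

lemma sepF_card {m n : ℕ} (h : m ≤ n) : (sepF X (γ m) (γ n)).card = n - m := hγ m n h

lemma sep_disjoint {m k n : ℕ} (h1 : m ≤ k) (h2 : k ≤ n) :
    Disjoint (sepF X (γ m) (γ k)) (sepF X (γ k) (γ n)) := by
  classical
  have hsub : sepF X (γ m) (γ n) ⊆ sepF X (γ m) (γ k) ∪ sepF X (γ k) (γ n) := by
    intro h hm
    rw [mem_sepF] at hm
    rw [mem_union, mem_sepF, mem_sepF]
    by_contra hcon
    push_neg at hcon
    exact hm (hcon.1.trans hcon.2)
  have c1 := sepF_card hγ h1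
  have c2 := sepF_card hγ h2
  have c3 := sepF_card hγ (h1.trans h2)
  have h4 := Finset.card_le_card hsub
  have h5 := Finset.card_union_add_card_inter (sepF X (γ m) (γ k)) (sepF X (γ k) (γ n))
  have h6 : ((sepF X (γ m) (γ k)) ∩ (sepF X (γ k) (γ n))).card = 0 := by
    have := Finset.card_union_le (sepF X (γ m) (γ k)) (sepF X (γ k) (γ n))
    omega
  rw [Finset.card_eq_zero] at h6
  exact Finset.disjoint_iff_inter_eq_empty.mpr h6

variable (hHd : ∀ i, X.side (Hd i) (γ i) ≠ X.side (Hd i) (γ (i + 1)))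
include hHd

lemma edge_eq {k : ℕ} {h : X.H} (hmem : X.side h (γ k) ≠ X.side h (γ (k+1))) : h = Hd k := by
  have hcard : (sepF X (γ k) (γ (k+1))).card = 1 := by
    rw [sepF_card hγ (by omega)]; omega
  obtain ⟨a, ha⟩ := Finset.card_eq_one.mp hcard
  have h1 : h ∈ sepF X (γ k) (γ (k+1)) := mem_sepF.mpr hmem
  have h2 : Hd k ∈ sepF X (γ k) (γ (k+1)) := mem_sepF.mpr (hHd k)
  rw [ha, Finset.mem_singleton] at h1 h2
  rw [h1, h2]

lemma side_pre {u q : ℕ} (h : u ≤ q) : X.side (Hd q) (γ u) = X.side (Hd q) (γ q) := by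
  by_contra hne
  have h1 : Hd q ∈ sepF X (γ u) (γ q) := mem_sepF.mpr hne
  have h2 : Hd q ∈ sepF X (γ q) (γ (q+1)) := mem_sepF.mpr (hHd q)
  exact Finset.disjoint_left.mp (sep_disjoint hγ h (by omega)) h1 h2

lemma side_post {q u : ℕ} (h : q < u) : X.side (Hd q) (γ u) = !(X.side (Hd q) (γ q)) := by
  have heq : X.side (Hd q) (γ (q+1)) = X.side (Hd q) (γ u) := by
    by_contra hne
    have h1 : Hd q ∈ sepF X (γ (q+1)) (γ u) := mem_sepF.mpr hne
    have h2 : Hd q ∈ sepF X (γ q) (γ (q+1)) := mem_sepF.mpr (hHd q)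
    exact Finset.disjoint_left.mp (sep_disjoint hγ (by omega : q ≤ q+1) (by omega)) h2 h1
  rw [← heq]
  exact bool_ne_iff.mp (Ne.symm (hHd q))

lemma Hd_inj {k l : ℕ} (h : k ≠ l) : Hd k ≠ Hd l := by
  rcases Nat.lt_or_ge k l with hkl | hge
  · intro heq
    have h1 : X.side (Hd l) (γ k) = X.side (Hd l) (γ l) := side_pre hγ hHd (le_of_lt hkl)
    have h2 : X.side (Hd l) (γ (k+1)) = X.side (Hd l) (γ l) := side_pre hγ hHd (by omega)
    rw [← heq] at h1 h2
    exact hHd k (h1.trans h2.symm)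
  · have hlk : l < k := by omega
    intro heq
    have h1 : X.side (Hd k) (γ l) = X.side (Hd k) (γ k) := side_pre hγ hHd (le_of_lt hlk)
    have h2 : X.side (Hd k) (γ (l+1)) = X.side (Hd k) (γ k) := side_pre hγ hHd (by omega)
    rw [heq] at h1 h2
    exact hHd l (h1.trans h2.symm)

lemma side_eq_of {h : X.H} {m n : ℕ} (hmn : m ≤ n) (hne : ∀ k, m ≤ k → k < n → h ≠ Hd k) :
    X.side h (γ m) = X.side h (γ n) := by
  induction n, hmn using Nat.le_induction with
  | base => rfl
  | succ n hmn ih =>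
    have h1 := ih (fun k hk1 hk2 => hne k hk1 (by omega))
    by_contra hcon
    have h2 : X.side h (γ n) ≠ X.side h (γ (n+1)) := fun he => hcon (h1.trans he)
    exact hne n hmn (by omega) (edge_eq hγ hHd h2)

lemma sep_mem {h : X.H} {m n : ℕ} (hmn : m ≤ n) (hne : X.side h (γ m) ≠ X.side h (γ n)) :
    ∃ k, m ≤ k ∧ k < n ∧ h = Hd k := by
  by_contra hcon
  push_neg at hcon
  exact hne (side_eq_of hγ hHd hmn hcon)


lemma nc_empty {k l : ℕ} (hkl : k < l) (hnc : ¬ X.Crosses (Hd k) (Hd l)) :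
    ∀ x, X.side (Hd l) x = !(X.side (Hd l) (γ l)) → X.side (Hd k) x = !(X.side (Hd k) (γ k)) := by
  unfold Crosses at hnc
  push_neg at hnc
  obtain ⟨b, b', hb⟩ := hnc
  have w1l : X.side (Hd l) (γ k) = X.side (Hd l) (γ l) := side_pre hγ hHd (le_of_lt hkl)
  have w2k : X.side (Hd k) (γ (k+1)) = !(X.side (Hd k) (γ k)) := side_post hγ hHd (by omega)
  have w2l : X.side (Hd l) (γ (k+1)) = X.side (Hd l) (γ l) := side_pre hγ hHd (by omega)
  have w3k : X.side (Hd k) (γ (l+1)) = !(X.side (Hd k) (γ k)) := side_post hγ hHd (by omega)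
  have w3l : X.side (Hd l) (γ (l+1)) = !(X.side (Hd l) (γ l)) := side_post hγ hHd (by omega)
  rcases bool_cases b (X.side (Hd k) (γ k)) with hbk | hbk <;>
    rcases bool_cases b' (X.side (Hd l) (γ l)) with hbl | hbl
  · exact absurd (w1l.trans hbl.symm) (hb (γ k) hbk.symm)
  · intro x hx
    rcases bool_cases (X.side (Hd k) x) (X.side (Hd k) (γ k)) with hh | hh
    · exact absurd (hx.trans hbl.symm) (hb x (hh.trans hbk.symm))
    · exact hh
  · exact absurd (w2l.trans hbl.symm) (hb (γ (k+1)) (w2k.trans hbk.symm))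
  · exact absurd (w3l.trans hbl.symm) (hb (γ (l+1)) (w3k.trans hbk.symm))

lemma fact_sep {i k j : ℕ} (hik : i < k) (hkj : k < j)
    (hbi : ¬ X.Crosses (Hd k) (Hd i)) (haj : ¬ X.Crosses (Hd k) (Hd j)) :
    X.SepH (Hd k) (Hd i) (Hd j) := by
  have E1 := nc_empty hγ hHd hik (fun hc => hbi (crosses_symm hc))
  have E2 := nc_empty hγ hHd hkj haj
  refine ⟨X.side (Hd k) (γ k),
    ⟨Hd_inj hγ hHd (by omega), !(X.side (Hd i) (γ i)), fun x hx => E1 x hx⟩,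
    ⟨Hd_inj hγ hHd (by omega), X.side (Hd j) (γ j), fun x hx => ?_⟩⟩
  rw [Bool.not_not] at hx
  rcases bool_cases (X.side (Hd j) x) (X.side (Hd j) (γ j)) with hh | hh
  · exact hh
  · have := E2 x hh
    rw [hx] at this
    exact absurd this bool_not_self

lemma pair_contact {i n m j : ℕ} (h1 : i < n) (h2 : n < m) (h3 : m < j)
    (hcij : X.Contact (Hd i) (Hd j))
    (hbn : ¬ X.Crosses (Hd n) (Hd i)) (ham : ¬ X.Crosses (Hd m) (Hd j)) :
    X.Contact (Hd n) (Hd m) := by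
  refine ⟨Hd_inj hγ hHd (by omega), ?_⟩
  rintro ⟨w, b, ⟨hwn, c, hcn⟩, ⟨hwm, c', hcm⟩⟩
  -- one endpoint of the edge dual to `Hd n` is on side `b` of `w`
  have hu : ∃ u, (u = n ∨ u = n + 1) ∧ X.side w (γ u) = b := by
    by_contra hcon
    push_neg at hcon
    have e1 : X.side w (γ n) = !b :=
      bool_ne_iff.mp (hcon n (Or.inl rfl))
    have e2 : X.side w (γ (n+1)) = !b :=
      bool_ne_iff.mp (hcon (n+1) (Or.inr rfl))
    exact hHd n ((hcn _ e1).trans (hcn _ e2).symm)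
  have hv : ∃ v, (v = m ∨ v = m + 1) ∧ X.side w (γ v) = !b := by
    by_contra hcon
    push_neg at hcon
    have e1 : X.side w (γ m) = !(!b) := bool_ne_iff.mp (hcon m (Or.inl rfl))
    have e2 : X.side w (γ (m+1)) = !(!b) := bool_ne_iff.mp (hcon (m+1) (Or.inr rfl))
    exact hHd m ((hcm _ e1).trans (hcm _ e2).symm)
  obtain ⟨u, huc, hu⟩ := hu
  obtain ⟨v, hvc, hv⟩ := hv
  have huv : u < v := by
    have hne : u ≠ v := by
      intro he
      rw [he, hv] at hu
      cases b <;> simp_all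
    rcases huc with rfl | rfl <;> rcases hvc with rfl | rfl <;> omega
  obtain ⟨q, huq, hqv, rfl⟩ := sep_mem hγ hHd (le_of_lt huv)
    (by rw [hu, hv]; cases b <;> simp)
  have hqn : q ≠ n := fun he => hwn (congrArg Hd he.symm)
  have hqm : q ≠ m := fun he => hwm (congrArg Hd he.symm)
  have hnq : n < q := by rcases huc with rfl | rfl <;> omega
  have hqm' : q < m := by rcases hvc with rfl | rfl <;> omega
  -- determine b = side (Hd q) (γ q)
  have hbval : b = X.side (Hd q) (γ q) := by
    rcases bool_cases b (X.side (Hd q) (γ q)) with hh | hh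
    · exact hh
    · exfalso
      have e1 : X.side (Hd q) (γ n) = !b := by
        rw [side_pre hγ hHd (by omega : n ≤ q), hh, Bool.not_not]
      have e2 : X.side (Hd q) (γ (n+1)) = !b := by
        rw [side_pre hγ hHd (by omega : n+1 ≤ q), hh, Bool.not_not]
      exact hHd n ((hcn _ e1).trans (hcn _ e2).symm)
  -- E2' : on the far side of Hd q, side (Hd n) is constantly the post value
  have hcval : c = !(X.side (Hd n) (γ n)) := by
    have := hcn (γ (q+1)) (by rw [side_post hγ hHd (by omega : q < q+1), hbval])
    rw [side_post hγ hHd (by omega : n < q+1)] at this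
    exact this.symm
  have hc'val : c' = X.side (Hd m) (γ m) := by
    have := hcm (γ q) (by rw [Bool.not_not, hbval])
    rw [side_pre hγ hHd (by omega : q ≤ m)] at this
    exact this.symm
  have E1 := nc_empty hγ hHd h1 (fun hc => hbn (crosses_symm hc))
  have E4 := nc_empty hγ hHd h3 ham
  -- Hd q separates Hd i from Hd j
  refine hcij.2 ⟨Hd q, X.side (Hd q) (γ q),
    ⟨Hd_inj hγ hHd (by omega : i ≠ q), !(X.side (Hd i) (γ i)), fun x hx => ?_⟩,
    ⟨Hd_inj hγ hHd (by omega : j ≠ q), X.side (Hd j) (γ j), fun x hx => ?_⟩⟩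
  · -- side (Hd q) x = !σq  →  side (Hd i) x = !σi
    have hn : X.side (Hd n) x = !(X.side (Hd n) (γ n)) := by
      rw [← hcval]
      exact hcn x (by rw [hbval]; exact hx)
    exact E1 x hn
  · -- side (Hd q) x = σq  →  side (Hd j) x = σj
    rw [Bool.not_not] at hx
    have hm : X.side (Hd m) x = X.side (Hd m) (γ m) := by
      rw [← hc'val]
      exact hcm x (by rw [Bool.not_not, hbval]; exact hx)
    rcases bool_cases (X.side (Hd j) x) (X.side (Hd j) (γ j)) with hh | hh
    · exact hh
    · have := E4 x hh
      rw [hm] at this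
      exact absurd this bool_not_self

lemma gate_fwd {i m : ℕ} (him : i < m) :
    ∃ y ∈ X.carrier (Hd i),
      X.dist (γ m) y ≤
        (((Finset.Ico (i+1) m).filter (fun l => ¬ X.Crosses (Hd l) (Hd i))).card) := by
  classical
  set o : X.H → Bool :=
    fun h => if X.Crosses h (Hd i) then X.side h (γ m) else X.side h (γ (i+1)) with ho
  have key : ∀ h h', X.Crosses h (Hd i) → ¬ X.Crosses h' (Hd i) →
      ∃ y, X.side h y = X.side h (γ m) ∧ X.side h' y = X.side h' (γ (i+1)) := by
    intro h h' hc hnc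
    by_cases heq : X.side h' (γ (i+1)) = X.side h' (γ m)
    · exact ⟨γ m, rfl, heq.symm⟩
    · obtain ⟨l, hl1, hl2, rfl⟩ := sep_mem hγ hHd (by omega : i+1 ≤ m) heq
      obtain ⟨x, hx1, hx2⟩ := hc (X.side h (γ m)) (X.side (Hd i) (γ i))
      refine ⟨x, hx1, ?_⟩
      have hE := nc_empty hγ hHd (by omega : i < l) (fun hcc => hnc (crosses_symm hcc))
      have hlx : X.side (Hd l) x = X.side (Hd l) (γ l) := by
        rcases bool_cases (X.side (Hd l) x) (X.side (Hd l) (γ l)) with hh | hh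
        · exact hh
        · have := hE x hh
          rw [hx2] at this
          exact absurd this bool_not_self
      rw [hlx, side_pre hγ hHd (by omega : i+1 ≤ l)]
  have hcons : ∀ h h', ∃ y, X.side h y = o h ∧ X.side h' y = o h' := by
    intro h h'
    by_cases c1 : X.Crosses h (Hd i) <;> by_cases c2 : X.Crosses h' (Hd i)
    · exact ⟨γ m, by simp [ho, c1], by simp [ho, c2]⟩
    · obtain ⟨y, hy1, hy2⟩ := key h h' c1 c2
      exact ⟨y, by simp [ho, c1, hy1], by simp [ho, c2, hy2]⟩
    · obtain ⟨y, hy1, hy2⟩ := key h' h c2 c1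
      exact ⟨y, by simp [ho, c1, hy2], by simp [ho, c2, hy1]⟩
    · exact ⟨γ (i+1), by simp [ho, c1], by simp [ho, c2]⟩
  have hfin : {h | o h ≠ X.side h (γ m)}.Finite := by
    apply (X.sep_finite (γ (i+1)) (γ m)).subset
    intro h hh
    simp only [Set.mem_setOf_eq] at hh ⊢
    by_cases c : X.Crosses h (Hd i)
    · simp [ho, c] at hh
    · simp only [ho, if_neg c] at hh
      exact hh
  obtain ⟨y, hy⟩ := X.realize o (γ m) hcons hfin
  have hoHdi : o (Hd i) = !(X.side (Hd i) (γ i)) := by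
    by_cases c : X.Crosses (Hd i) (Hd i) <;>
      simp [ho, c, side_post hγ hHd him, side_post hγ hHd (Nat.lt_succ_self i)]
  set o' : X.H → Bool := fun h => if h = Hd i then X.side (Hd i) (γ i) else o h with ho'
  have key' : ∀ h', h' ≠ Hd i →
      ∃ y, X.side (Hd i) y = X.side (Hd i) (γ i) ∧ X.side h' y = o h' := by
    intro h' hne
    by_cases c2 : X.Crosses h' (Hd i)
    · obtain ⟨x, hx1, hx2⟩ := c2 (X.side h' (γ m)) (X.side (Hd i) (γ i))
      exact ⟨x, hx2, by simp [ho, c2, hx1]⟩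
    · refine ⟨γ i, rfl, ?_⟩
      simp only [ho, if_neg c2]
      by_contra hne2
      exact hne (edge_eq hγ hHd hne2)
  have hcons' : ∀ h h', ∃ y, X.side h y = o' h ∧ X.side h' y = o' h' := by
    intro h h'
    by_cases d1 : h = Hd i <;> by_cases d2 : h' = Hd i
    · subst d1; subst d2
      exact ⟨γ i, by simp [ho'], by simp [ho']⟩
    · subst d1
      obtain ⟨y, hy1, hy2⟩ := key' h' d2
      exact ⟨y, by simp [ho', hy1], by simp [ho', d2, hy2]⟩
    · subst d2
      obtain ⟨y, hy1, hy2⟩ := key' h d1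
      exact ⟨y, by simp [ho', d1, hy2], by simp [ho', hy1]⟩
    · obtain ⟨y, hy1, hy2⟩ := hcons h h'
      exact ⟨y, by simp [ho', d1, hy1], by simp [ho', d2, hy2]⟩
  have hfin' : {h | o' h ≠ X.side h (γ m)}.Finite := by
    apply (hfin.union (Set.finite_singleton (Hd i))).subset
    intro h hh
    simp only [Set.mem_setOf_eq, Set.mem_union, Set.mem_singleton_iff] at hh ⊢
    by_cases d : h = Hd i
    · exact Or.inr d
    · left; simpa [ho', d] using hh
  obtain ⟨y', hy'⟩ := X.realize o' (γ m) hcons' hfin'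
  have hadj : X.Adj y y' := by
    refine ⟨Hd i, ?_, ?_⟩
    · rw [hy, hy', hoHdi]
      simp [ho']
    · intro h'' hne
      by_contra hcon
      rw [hy, hy'] at hne
      exact hne (by simp [ho', hcon])
  have hycar : y ∈ X.carrier (Hd i) := by
    refine ⟨y', hadj, ?_⟩
    rw [hy, hy', hoHdi]
    simp [ho']
  refine ⟨y, hycar, ?_⟩
  rw [dist_eq_card]
  have hsub : sepF X (γ m) y ⊆
      ((Finset.Ico (i+1) m).filter (fun l => ¬ X.Crosses (Hd l) (Hd i))).image Hd := by
    intro h hh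
    rw [mem_sepF, hy] at hh
    by_cases c : X.Crosses h (Hd i)
    · simp [ho, c] at hh
    · simp only [ho, if_neg c] at hh
      obtain ⟨l, hl1, hl2, rfl⟩ := sep_mem hγ hHd (by omega : i+1 ≤ m) (Ne.symm hh)
      exact Finset.mem_image.mpr ⟨l,
        Finset.mem_filter.mpr ⟨Finset.mem_Ico.mpr ⟨hl1, hl2⟩, c⟩, rfl⟩
  exact le_trans (Finset.card_le_card hsub) Finset.card_image_le

lemma gate_bwd {m j : ℕ} (hmj : m ≤ j) :
    ∃ y ∈ X.carrier (Hd j),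
      X.dist (γ m) y ≤
        (((Finset.Ico m j).filter (fun l => ¬ X.Crosses (Hd l) (Hd j))).card) := by
  classical
  set o : X.H → Bool :=
    fun h => if X.Crosses h (Hd j) then X.side h (γ m) else X.side h (γ j) with ho
  have key : ∀ h h', X.Crosses h (Hd j) → ¬ X.Crosses h' (Hd j) →
      ∃ y, X.side h y = X.side h (γ m) ∧ X.side h' y = X.side h' (γ j) := by
    intro h h' hc hnc
    by_cases heq : X.side h' (γ j) = X.side h' (γ m)
    · exact ⟨γ m, rfl, heq.symm⟩
    · obtain ⟨l, hl1, hl2, rfl⟩ := sep_mem hγ hHd hmj (fun he => heq he.symm)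
      obtain ⟨x, hx1, hx2⟩ := hc (X.side h (γ m)) (!(X.side (Hd j) (γ j)))
      refine ⟨x, hx1, ?_⟩
      have hE := nc_empty hγ hHd hl2 hnc
      rw [hE x hx2, side_post hγ hHd hl2]
  have hcons : ∀ h h', ∃ y, X.side h y = o h ∧ X.side h' y = o h' := by
    intro h h'
    by_cases c1 : X.Crosses h (Hd j) <;> by_cases c2 : X.Crosses h' (Hd j)
    · exact ⟨γ m, by simp [ho, c1], by simp [ho, c2]⟩
    · obtain ⟨y, hy1, hy2⟩ := key h h' c1 c2
      exact ⟨y, by simp [ho, c1, hy1], by simp [ho, c2, hy2]⟩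
    · obtain ⟨y, hy1, hy2⟩ := key h' h c2 c1
      exact ⟨y, by simp [ho, c1, hy2], by simp [ho, c2, hy1]⟩
    · exact ⟨γ j, by simp [ho, c1], by simp [ho, c2]⟩
  have hfin : {h | o h ≠ X.side h (γ m)}.Finite := by
    apply (X.sep_finite (γ j) (γ m)).subset
    intro h hh
    simp only [Set.mem_setOf_eq] at hh ⊢
    by_cases c : X.Crosses h (Hd j)
    · simp [ho, c] at hh
    · simp only [ho, if_neg c] at hh
      exact hh
  obtain ⟨y, hy⟩ := X.realize o (γ m) hcons hfin
  have hoHdj : o (Hd j) = X.side (Hd j) (γ j) := by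
    by_cases c : X.Crosses (Hd j) (Hd j) <;>
      simp [ho, c, side_pre hγ hHd hmj]
  set o' : X.H → Bool := fun h => if h = Hd j then !(X.side (Hd j) (γ j)) else o h with ho'
  have key' : ∀ h', h' ≠ Hd j →
      ∃ y, X.side (Hd j) y = !(X.side (Hd j) (γ j)) ∧ X.side h' y = o h' := by
    intro h' hne
    by_cases c2 : X.Crosses h' (Hd j)
    · obtain ⟨x, hx1, hx2⟩ := c2 (X.side h' (γ m)) (!(X.side (Hd j) (γ j)))
      exact ⟨x, hx2, by simp [ho, c2, hx1]⟩
    · refine ⟨γ (j+1), side_post hγ hHd (Nat.lt_succ_self j), ?_⟩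
      simp only [ho, if_neg c2]
      by_contra hne2
      exact hne (edge_eq hγ hHd (fun he => hne2 he.symm))
  have hcons' : ∀ h h', ∃ y, X.side h y = o' h ∧ X.side h' y = o' h' := by
    intro h h'
    by_cases d1 : h = Hd j <;> by_cases d2 : h' = Hd j
    · subst d1; subst d2
      exact ⟨γ (j+1), by simp [ho', side_post hγ hHd (Nat.lt_succ_self j)],
        by simp [ho', side_post hγ hHd (Nat.lt_succ_self j)]⟩
    · subst d1
      obtain ⟨y, hy1, hy2⟩ := key' h' d2
      exact ⟨y, by simp [ho', hy1], by simp [ho', d2, hy2]⟩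
    · subst d2
      obtain ⟨y, hy1, hy2⟩ := key' h d1
      exact ⟨y, by simp [ho', d1, hy2], by simp [ho', hy1]⟩
    · obtain ⟨y, hy1, hy2⟩ := hcons h h'
      exact ⟨y, by simp [ho', d1, hy1], by simp [ho', d2, hy2]⟩
  have hfin' : {h | o' h ≠ X.side h (γ m)}.Finite := by
    apply (hfin.union (Set.finite_singleton (Hd j))).subset
    intro h hh
    simp only [Set.mem_setOf_eq, Set.mem_union, Set.mem_singleton_iff] at hh ⊢
    by_cases d : h = Hd j
    · exact Or.inr d
    · left; simpa [ho', d] using hh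
  obtain ⟨y', hy'⟩ := X.realize o' (γ m) hcons' hfin'
  have hadj : X.Adj y y' := by
    refine ⟨Hd j, ?_, ?_⟩
    · rw [hy, hy', hoHdj]
      simp [ho']
    · intro h'' hne
      by_contra hcon
      rw [hy, hy'] at hne
      exact hne (by simp [ho', hcon])
  have hycar : y ∈ X.carrier (Hd j) := by
    refine ⟨y', hadj, ?_⟩
    rw [hy, hy', hoHdj]
    simp [ho']
  refine ⟨y, hycar, ?_⟩
  rw [dist_eq_card]
  have hsub : sepF X (γ m) y ⊆
      ((Finset.Ico m j).filter (fun l => ¬ X.Crosses (Hd l) (Hd j))).image Hd := by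
    intro h hh
    rw [mem_sepF, hy] at hh
    by_cases c : X.Crosses h (Hd j)
    · simp [ho, c] at hh
    · simp only [ho, if_neg c] at hh
      obtain ⟨l, hl1, hl2, rfl⟩ := sep_mem hγ hHd hmj hh
      exact Finset.mem_image.mpr ⟨l,
        Finset.mem_filter.mpr ⟨Finset.mem_Ico.mpr ⟨hl1, hl2⟩, c⟩, rfl⟩
  exact le_trans (Finset.card_le_card hsub) Finset.card_image_le

end

end CCC

/-- Lemma 3.2 (crossing bound).  If the full subgraph `Λ(γ)` of the contact
graph spanned by `W(γ)` has uniformly bounded complete bipartite subgraphs,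
and each connected subpath of `γ` lying in an `r`-neighborhood of a hyperplane
carrier has length bounded in terms of `r`, then hyperplanes dual to `γ` that
contact must be dual to uniformly close 1-cubes of `γ`. -/
theorem crossing_bound (X : CCC) (γ : ℕ → X.V) (hγ : X.IsGeodesicRay γ)
    (Hd : ℕ → X.H) (hHd : ∀ i, X.side (Hd i) (γ i) ≠ X.side (Hd i) (γ (i + 1)))
    (B' : ℕ)
    (hbip : ∀ p : ℕ, ∀ A B : Finset X.H, A.card = p → B.card = p → Disjoint A B →
      (∀ a ∈ A, a ∈ X.WSet γ) → (∀ b ∈ B, b ∈ X.WSet γ) →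
      (∀ a ∈ A, ∀ b ∈ B, X.Contact a b) → p ≤ B')
    (B'' : ℕ → ℕ)
    (hsub : ∀ (r : ℕ) (h : X.H) (i t : ℕ),
      (∀ k ≤ t, ∃ y ∈ X.carrier h, X.dist (γ (i + k)) y ≤ r) → t ≤ B'' r) :
    ∃ B : ℕ, ∀ i j : ℕ, X.Contact (Hd i) (Hd j) → Nat.dist i j ≤ B := by
  classical
  refine ⟨2 * B'' B' + 2, ?_⟩
  have key : ∀ i j : ℕ, i < j → X.Contact (Hd i) (Hd j) → j - i ≤ 2 * B'' B' + 2 := by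
    intro i j hij hcont
    set Ib := (Finset.Ioo i j).filter (fun l => ¬ X.Crosses (Hd l) (Hd i)) with hIb
    set Ia := (Finset.Ioo i j).filter (fun l => ¬ X.Crosses (Hd l) (Hd j)) with hIa
    by_cases hb : Ib.card ≤ B'
    · -- the whole segment stays close to the carrier of `Hd i`
      have hb2 : j - (i+1) ≤ B'' B' := by
        apply hsub B' (Hd i) (i+1) (j - (i+1))
        intro k hk
        obtain ⟨y, hy1, hy2⟩ := CCC.gate_fwd hγ hHd (show i < i+1+k by omega)
        refine ⟨y, hy1, le_trans hy2 (le_trans (Finset.card_le_card ?_) hb)⟩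
        intro l hl
        rw [Finset.mem_filter, Finset.mem_Ico] at hl
        rw [hIb, Finset.mem_filter, Finset.mem_Ioo]
        exact ⟨⟨by omega, by omega⟩, hl.2⟩
      omega
    by_cases ha : Ia.card ≤ B'
    · have ha2 : j - (i+1) ≤ B'' B' := by
        apply hsub B' (Hd j) (i+1) (j - (i+1))
        intro k hk
        obtain ⟨y, hy1, hy2⟩ := CCC.gate_bwd hγ hHd (show i+1+k ≤ j by omega)
        refine ⟨y, hy1, le_trans hy2 (le_trans (Finset.card_le_card ?_) ha)⟩
        intro l hl
        rw [Finset.mem_filter, Finset.mem_Ico] at hl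
        rw [hIa, Finset.mem_filter, Finset.mem_Ioo]
        exact ⟨⟨by omega, by omega⟩, hl.2⟩
      omega
    push_neg at hb ha
    have hjS : j ∈ (Finset.Icc (i+1) j).filter
        (fun m => B' + 1 ≤ (Ib.filter (· < m)).card) := by
      rw [Finset.mem_filter, Finset.mem_Icc]
      refine ⟨⟨by omega, le_refl j⟩, ?_⟩
      have hfil : Ib.filter (· < j) = Ib := by
        apply Finset.filter_true_of_mem
        intro l hl
        rw [hIb, Finset.mem_filter, Finset.mem_Ioo] at hl
        exact hl.1.2
      rw [hfil]; omega
    have hSne : ((Finset.Icc (i+1) j).filter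
        (fun m => B' + 1 ≤ (Ib.filter (· < m)).card)).Nonempty := ⟨j, hjS⟩
    obtain ⟨M, hMS, hMle⟩ : ∃ M ∈ (Finset.Icc (i+1) j).filter
        (fun m => B' + 1 ≤ (Ib.filter (· < m)).card),
        ∀ m ∈ (Finset.Icc (i+1) j).filter
          (fun m => B' + 1 ≤ (Ib.filter (· < m)).card), M ≤ m :=
      ⟨_, Finset.min'_mem _ hSne, fun m hm => Finset.min'_le _ m hm⟩
    rw [Finset.mem_filter, Finset.mem_Icc] at hMS
    obtain ⟨⟨hM1, hM2⟩, hM3⟩ := hMS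
    have hmin : ∀ m, i+1 ≤ m → m < M → (Ib.filter (· < m)).card ≤ B' := by
      intro m hm1 hm2
      by_contra hcon
      push_neg at hcon
      have hmS : m ∈ (Finset.Icc (i+1) j).filter
          (fun m => B' + 1 ≤ (Ib.filter (· < m)).card) := by
        rw [Finset.mem_filter, Finset.mem_Icc]
        exact ⟨⟨hm1, by omega⟩, hcon⟩
      exact absurd (hMle m hmS) (by omega)
    by_cases hg : B' + 1 ≤ (Ia.filter (fun l => M ≤ l)).card
    · -- a complete bipartite contact pattern of size (B'+1, B'+1): contradiction
      exfalso
      obtain ⟨P, hPsub, hPcard⟩ := Finset.exists_subset_card_eq hM3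
      obtain ⟨Q, hQsub, hQcard⟩ := Finset.exists_subset_card_eq hg
      have hinj : Function.Injective Hd := by
        intro a b hab
        by_contra hne
        exact CCC.Hd_inj hγ hHd hne hab
      have hPmem : ∀ n ∈ P, (i < n ∧ n < j) ∧ ¬ X.Crosses (Hd n) (Hd i) ∧ n < M := by
        intro n hn
        have h0 := hPsub hn
        rw [Finset.mem_filter] at h0
        have h2 := h0.1
        rw [hIb, Finset.mem_filter, Finset.mem_Ioo] at h2
        exact ⟨h2.1, h2.2, by simpa using h0.2⟩
      have hQmem : ∀ m ∈ Q, (i < m ∧ m < j) ∧ ¬ X.Crosses (Hd m) (Hd j) ∧ M ≤ m := by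
        intro m hm
        have h0 := hQsub hm
        rw [Finset.mem_filter] at h0
        have h2 := h0.1
        rw [hIa, Finset.mem_filter, Finset.mem_Ioo] at h2
        exact ⟨h2.1, h2.2, h0.2⟩
      have hle := hbip (B'+1) (P.image Hd) (Q.image Hd)
        (by rw [Finset.card_image_of_injective _ hinj, hPcard])
        (by rw [Finset.card_image_of_injective _ hinj, hQcard])
        ?disj ?wa ?wb ?con
      omega
      case disj =>
        rw [Finset.disjoint_left]
        intro a haP haQ
        obtain ⟨n, hn, rfl⟩ := Finset.mem_image.mp haP
        obtain ⟨m, hm, he⟩ := Finset.mem_image.mp haQ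
        have hnm := hinj he
        have h1 := (hPmem n hn).2.2
        have h2 := (hQmem m hm).2.2
        omega
      case wa =>
        rintro a ha
        obtain ⟨n, _, rfl⟩ := Finset.mem_image.mp ha
        exact ⟨n, hHd n⟩
      case wb =>
        rintro a ha
        obtain ⟨n, _, rfl⟩ := Finset.mem_image.mp ha
        exact ⟨n, hHd n⟩
      case con =>
        intro a ha bb hbb
        obtain ⟨n, hn, rfl⟩ := Finset.mem_image.mp ha
        obtain ⟨m, hm, rfl⟩ := Finset.mem_image.mp hbb
        obtain ⟨⟨hn1, hn2⟩, hn3, hn4⟩ := hPmem n hn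
        obtain ⟨⟨hm1, hm2⟩, hm3, hm4⟩ := hQmem m hm
        exact CCC.pair_contact hγ hHd hn1 (by omega) hm2 hcont hn3 hm3
    · push_neg at hg
      have hsuf : j - M ≤ B'' B' := by
        apply hsub B' (Hd j) M (j - M)
        intro k hk
        obtain ⟨y, hy1, hy2⟩ := CCC.gate_bwd hγ hHd (show M + k ≤ j by omega)
        refine ⟨y, hy1, le_trans hy2 (le_trans (Finset.card_le_card ?_)
          (by omega : (Ia.filter (fun l => M ≤ l)).card ≤ B'))⟩
        intro l hl
        rw [Finset.mem_filter, Finset.mem_Ico] at hl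
        rw [Finset.mem_filter]
        refine ⟨?_, by omega⟩
        rw [hIa, Finset.mem_filter, Finset.mem_Ioo]
        exact ⟨⟨by omega, hl.1.2⟩, hl.2⟩
      rcases Nat.eq_or_lt_of_le hM1 with heq | hlt
      · omega
      · have hpre : (M - 1) - (i+1) ≤ B'' B' := by
          apply hsub B' (Hd i) (i+1) ((M-1) - (i+1))
          intro k hk
          obtain ⟨y, hy1, hy2⟩ := CCC.gate_fwd hγ hHd (show i < i+1+k by omega)
          refine ⟨y, hy1, le_trans hy2 (le_trans (Finset.card_le_card ?_)
            (hmin (i+1+k) (by omega) (by omega)))⟩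
          intro l hl
          rw [Finset.mem_filter, Finset.mem_Ico] at hl
          rw [Finset.mem_filter]
          refine ⟨?_, by simpa using hl.1.2⟩
          rw [hIb, Finset.mem_filter, Finset.mem_Ioo]
          exact ⟨⟨by omega, by omega⟩, hl.2⟩
        omega
  intro i j hcont
  rcases Nat.lt_trichotomy i j with h | h | h
  · rw [Nat.dist_eq_sub_of_le (le_of_lt h)]
    exact key i j h hcont
  · subst h
    simp [Nat.dist_self]
  · rw [Nat.dist_comm, Nat.dist_eq_sub_of_le (le_of_lt h)]
    exact key j i h (CCC.contact_symm hcont)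
end
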